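/- arXiv:2105.00660 — 10 statements merged into one kernel-verified Lean document; each statement's English description precedes it below -/
import Mathlib

section
/- For all natural numbers n and k with 2k ≤ n, the coefficient c(n, n-2k) in the expansion of x^n in the Fibonacci polynomial basis equals C(n,k) - C(n,k-1), where the Fibonacci polynomials satisfy F_n(x) = x·F_{n-1}(x) - F_{n-2}(x) with F_0 = 1, F_1 = x, and the coefficients are defined by x^n = Σ_k c(n,k)·F_k(x). -/
/-!
Multiplication by `X` acts on the Fibonacci basis by `X * F j = F (j + 1) + F (j - 1)` (with
`F (-1) = 0`), so the coefficients of `X ^ n` obey Pascal's rule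
`c (n + 1) (j + 1) = c n j + c n (j + 2)` together with the reflection `c (n + 1) 0 = c n 1` at
the boundary. The ballot numbers
`C(n, k) - C(n, k - 1)`, placed at `j = n - 2k`, satisfy the same rules; the boundary rule is the
symmetry `C(2m + 1, m + 1) = C(2m + 1, m)`. Since `F j` is monic of degree `j`, the coefficients
in this basis are unique.
-/

open Polynomial Finset

/-- Fibonacci polynomials: F₀ = 1, F₁ = X, Fₙ = X·Fₙ₋₁ - Fₙ₋₂. -/
noncomputable def fibPoly : ℕ → Polynomial ℚ
  | 0 => 1
  | 1 => X
  | (n + 2) => X * fibPoly (n + 1) - fibPoly n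

namespace Polynomial

variable {R : Type*} [CommRing R]

theorem coeff_sum_range_C_mul_of_monic {p : ℕ → R[X]} (hmonic : ∀ k, (p k).Monic)
    (hdeg : ∀ k, (p k).natDegree = k) (a : ℕ → R) (N : ℕ) :
    (∑ k ∈ range (N + 1), C (a k) * p k).coeff N = a N := by
  have hlead : (p N).coeff N = 1 := by simpa only [hdeg] using (hmonic N).coeff_natDegree
  rw [finsetSum_coeff, sum_range_succ, sum_eq_zero, zero_add, coeff_C_mul, hlead, mul_one]
  intro k hk
  rw [coeff_C_mul, coeff_eq_zero_of_natDegree_lt (by rw [hdeg]; exact mem_range.mp hk), mul_zero]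

theorem eq_of_sum_range_C_mul_eq_of_monic {p : ℕ → R[X]} (hmonic : ∀ k, (p k).Monic)
    (hdeg : ∀ k, (p k).natDegree = k) {a b : ℕ → R} {N : ℕ}
    (h : ∑ k ∈ range N, C (a k) * p k = ∑ k ∈ range N, C (b k) * p k) :
    ∀ k < N, a k = b k := by
  induction N with
  | zero => simp
  | succ N ih =>
    have hN : a N = b N := by
      rw [← coeff_sum_range_C_mul_of_monic hmonic hdeg a, h,
        coeff_sum_range_C_mul_of_monic hmonic hdeg]
    rw [sum_range_succ, sum_range_succ, hN, add_left_inj] at h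
    intro k hk
    rcases Nat.lt_succ_iff_lt_or_eq.mp hk with hk | rfl
    exacts [ih h k hk, hN]

end Polynomial

@[simp] theorem fibPoly_zero : fibPoly 0 = 1 := rfl

@[simp] theorem fibPoly_one : fibPoly 1 = X := rfl

theorem fibPoly_add_two (n : ℕ) : fibPoly (n + 2) = X * fibPoly (n + 1) - fibPoly n := rfl

theorem X_mul_fibPoly_succ (n : ℕ) : X * fibPoly (n + 1) = fibPoly (n + 2) + fibPoly n := by
  rw [fibPoly_add_two]; ring

theorem fibPoly_monic_and_natDegree : ∀ n, (fibPoly n).Monic ∧ (fibPoly n).natDegree = n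
  | 0 => ⟨monic_one, natDegree_one⟩
  | 1 => ⟨monic_X, natDegree_X⟩
  | n + 2 => by
    obtain ⟨hmonic₁, hdeg₁⟩ := fibPoly_monic_and_natDegree (n + 1)
    obtain ⟨-, hdeg₀⟩ := fibPoly_monic_and_natDegree n
    have hdeg : (X * fibPoly (n + 1)).natDegree = n + 2 := by
      rw [natDegree_mul X_ne_zero hmonic₁.ne_zero, natDegree_X, hdeg₁, add_comm]
    have hlt : (fibPoly n).natDegree < (X * fibPoly (n + 1)).natDegree := by omega
    rw [fibPoly_add_two]
    exact ⟨(monic_X.mul hmonic₁).sub_of_left (degree_lt_degree hlt),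
      by rw [natDegree_sub_eq_left_of_natDegree_lt hlt, hdeg]⟩

theorem fibPoly_monic (n : ℕ) : (fibPoly n).Monic := (fibPoly_monic_and_natDegree n).1

theorem natDegree_fibPoly (n : ℕ) : (fibPoly n).natDegree = n := (fibPoly_monic_and_natDegree n).2

theorem X_mul_sum_range_C_mul_fibPoly (a : ℕ → ℚ) (N : ℕ) (h₁ : a (N + 1) = 0)
    (h₂ : a (N + 2) = 0) :
    X * ∑ j ∈ range (N + 1), C (a j) * fibPoly j =
      C (a 1) * fibPoly 0 + ∑ j ∈ range (N + 1), C (a j + a (j + 2)) * fibPoly (j + 1) := by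
  calc X * ∑ j ∈ range (N + 1), C (a j) * fibPoly j
      = C (a 0) * fibPoly 1 + ∑ j ∈ range N, C (a (j + 1)) * (fibPoly (j + 2) + fibPoly j) := by
        rw [mul_sum, sum_range_succ', add_comm]
        simp only [← X_mul_fibPoly_succ, mul_left_comm X]
        rw [fibPoly_zero, fibPoly_one, mul_one]
    _ = ∑ j ∈ range (N + 1), C (a j) * fibPoly (j + 1)
          + ∑ j ∈ range (N + 2), C (a (j + 1)) * fibPoly j := by
        rw [sum_range_succ' (fun j ↦ C (a j) * fibPoly (j + 1)), sum_range_succ _ (N + 1),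
          sum_range_succ _ N, h₁, h₂]
        simp only [mul_add, sum_add_distrib, C_0, zero_mul, add_zero]
        ring
    _ = _ := by
        rw [sum_range_succ' _ (N + 1)]
        simp only [map_add, add_mul, sum_add_distrib]
        ring

def ballot (n : ℕ) : ℕ → ℚ
  | 0 => 1
  | k + 1 => n.choose (k + 1) - n.choose k

theorem ballot_eq (n k : ℕ) :
    ballot n k = (n.choose k : ℚ) - (if k = 0 then 0 else (n.choose (k - 1) : ℚ)) := by
  cases k <;> simp [ballot]

theorem ballot_succ_zero (n : ℕ) : ballot (n + 1) 0 = ballot n 0 := rfl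

theorem ballot_succ_succ (n k : ℕ) : ballot (n + 1) (k + 1) = ballot n (k + 1) + ballot n k := by
  cases k <;> simp only [ballot, Nat.choose_succ_succ', Nat.choose_zero_right] <;> push_cast <;>
    ring

theorem ballot_two_mul_add_one_succ (m : ℕ) : ballot (2 * m + 1) (m + 1) = 0 := by
  rw [ballot, Nat.choose_symm_half, sub_self]

noncomputable def fibCoeff (n j : ℕ) : ℚ :=
  if j ≤ n ∧ Even (n - j) then ballot n ((n - j) / 2) else 0

theorem fibCoeff_add_two_mul (j k : ℕ) : fibCoeff (j + 2 * k) j = ballot (j + 2 * k) k := by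
  rw [fibCoeff, if_pos ⟨by omega, by simp⟩]
  congr 1
  omega

theorem fibCoeff_eq_zero {n j : ℕ} (h : ∀ k, n ≠ j + 2 * k) : fibCoeff n j = 0 := by
  rw [fibCoeff, if_neg]
  rintro ⟨hle, k, hk⟩
  exact h k (by omega)

theorem fibCoeff_succ_zero (n : ℕ) : fibCoeff (n + 1) 0 = fibCoeff n 1 := by
  rcases Nat.even_or_odd n with ⟨m, rfl⟩ | ⟨m, rfl⟩
  · rw [fibCoeff_eq_zero (by omega), fibCoeff_eq_zero (by omega)]
  · rw [show 2 * m + 1 + 1 = 0 + 2 * (m + 1) by ring, fibCoeff_add_two_mul,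
      show 0 + 2 * (m + 1) = 2 * m + 1 + 1 by ring, ballot_succ_succ, ballot_two_mul_add_one_succ,
      zero_add, show 2 * m + 1 = 1 + 2 * m by ring, fibCoeff_add_two_mul]

theorem fibCoeff_succ_succ (n j : ℕ) :
    fibCoeff (n + 1) (j + 1) = fibCoeff n j + fibCoeff n (j + 2) := by
  by_cases h : ∃ k, n = j + 2 * k
  · obtain ⟨k, rfl⟩ := h
    rw [show j + 2 * k + 1 = j + 1 + 2 * k by ring, fibCoeff_add_two_mul, fibCoeff_add_two_mul]
    rcases k with _ | k
    · rw [fibCoeff_eq_zero (by omega), add_zero]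
      exact ballot_succ_zero _
    · rw [show j + 2 * (k + 1) = j + 2 + 2 * k by ring, fibCoeff_add_two_mul,
        show j + 1 + 2 * (k + 1) = j + 2 + 2 * k + 1 by ring, ballot_succ_succ]
  · push Not at h
    rw [fibCoeff_eq_zero fun k ↦ by have := h k; omega, fibCoeff_eq_zero h,
      fibCoeff_eq_zero fun k ↦ by have := h (k + 1); omega, add_zero]

theorem X_pow_eq_sum_fibCoeff (n : ℕ) :
    (X : ℚ[X]) ^ n = ∑ j ∈ range (n + 1), C (fibCoeff n j) * fibPoly j := by
  induction n with
  | zero => simp [fibCoeff, ballot]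
  | succ n ih =>
    rw [pow_succ', ih, X_mul_sum_range_C_mul_fibPoly _ _ (fibCoeff_eq_zero (by omega))
      (fibCoeff_eq_zero (by omega)), sum_range_succ' _ (n + 1), fibCoeff_succ_zero]
    simp only [fibCoeff_succ_succ]
    ring

theorem stmt_0 (c : ℕ → ℕ → ℚ)
    (hc : ∀ n : ℕ, (X : Polynomial ℚ) ^ n =
      ∑ k ∈ Finset.range (n + 1), Polynomial.C (c n k) * fibPoly k) :
    ∀ n k : ℕ, 2 * k ≤ n →
      c n (n - 2 * k) =
        (n.choose k : ℚ) - (if k = 0 then 0 else (n.choose (k - 1) : ℚ)) := by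
  intro n k hk
  have hunique : ∀ j < n + 1, c n j = fibCoeff n j :=
    eq_of_sum_range_C_mul_eq_of_monic fibPoly_monic natDegree_fibPoly
      ((hc n).symm.trans (X_pow_eq_sum_fibCoeff n))
  obtain ⟨m, rfl⟩ : ∃ m, n = m + 2 * k := ⟨n - 2 * k, by omega⟩
  rw [hunique _ (by omega), Nat.add_sub_cancel, fibCoeff_add_two_mul, ballot_eq]
end

section
/- The Hankel determinant det(C_{i+j})_{i,j=0}^{n-1} of Catalan numbers equals 1 for every positive integer n. -/
def a : ℕ → ℕ → ℤ
  | 0, 0 => 1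
  | 0, _+1 => 0
  | i+1, 0 => a i 0 + a i 1
  | i+1, k+1 => a i k + 2 * a i (k+1) + a i (k+2)

lemma a_closed : ∀ i k, a i k = ((2*i).choose (i+k) : ℤ) - ((2*i).choose (i+k+1) : ℤ) := by
  intro i
  induction i with
  | zero =>
    intro k
    match k with
    | 0 => simp [a]
    | k+1 =>
      show (0:ℤ) = _
      rw [Nat.choose_eq_zero_of_lt (show 0 < 0+(k+1) by omega),
        Nat.choose_eq_zero_of_lt (show 0 < 0+(k+1)+1 by omega)]
      simp
  | succ i ih =>
    intro k
    match k with
    | 0 =>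
      show a i 0 + a i 1 = _
      rw [ih 0, ih 1]
      rw [show 2*(i+1) = (2*i+1)+1 from by ring, show i+1+0 = i+1 from rfl]
      have e1 : (((2*i+1)+1).choose (i+1) : ℤ) = (2*i+1).choose i + (2*i+1).choose (i+1) := by
        exact_mod_cast Nat.choose_succ_succ (2*i+1) i
      have e2 : (((2*i+1)+1).choose (i+1+1) : ℤ) = (2*i+1).choose (i+1) + (2*i+1).choose (i+2) := by
        exact_mod_cast Nat.choose_succ_succ (2*i+1) (i+1)
      have e3 : ((2*i+1).choose (i+1) : ℤ) = (2*i+1).choose i := by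
        exact_mod_cast Nat.choose_symm_half i
      have e4 : ((2*i+1).choose (i+1) : ℤ) = (2*i).choose i + (2*i).choose (i+1) := by
        exact_mod_cast Nat.choose_succ_succ (2*i) i
      have e5 : ((2*i+1).choose (i+2) : ℤ) = (2*i).choose (i+1) + (2*i).choose (i+2) := by
        exact_mod_cast Nat.choose_succ_succ (2*i) (i+1)
      have g1 : ((2*i).choose (i+0) : ℤ) = (2*i).choose i := by norm_num
      have g2 : ((2*i).choose (i+0+1) : ℤ) = (2*i).choose (i+1) := by norm_num
      linarith
    | k+1 =>
      show a i k + 2 * a i (k+1) + a i (k+2) = _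
      rw [ih k, ih (k+1), ih (k+2)]
      rw [show 2*(i+1) = (2*i+1)+1 from by ring,
        show i+1+(k+1) = (i+k+1)+1 from by ring,
        show (i+k+1)+1+1 = (i+k+2)+1 from by ring]
      have e1 : (((2*i+1)+1).choose ((i+k+1)+1) : ℤ)
          = (2*i+1).choose (i+k+1) + (2*i+1).choose (i+k+2) := by
        exact_mod_cast Nat.choose_succ_succ (2*i+1) (i+k+1)
      have e2 : (((2*i+1)+1).choose ((i+k+2)+1) : ℤ)
          = (2*i+1).choose (i+k+2) + (2*i+1).choose (i+k+3) := by
        exact_mod_cast Nat.choose_succ_succ (2*i+1) (i+k+2)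
      have e3 : ((2*i+1).choose (i+k+1) : ℤ) = (2*i).choose (i+k) + (2*i).choose (i+k+1) := by
        exact_mod_cast Nat.choose_succ_succ (2*i) (i+k)
      have e4 : ((2*i+1).choose (i+k+2) : ℤ) = (2*i).choose (i+k+1) + (2*i).choose (i+k+2) := by
        exact_mod_cast Nat.choose_succ_succ (2*i) (i+k+1)
      have e5 : ((2*i+1).choose (i+k+3) : ℤ) = (2*i).choose (i+k+2) + (2*i).choose (i+k+3) := by
        exact_mod_cast Nat.choose_succ_succ (2*i) (i+k+2)
      have g1 : ((2*i).choose (i+(k+1)) : ℤ) = (2*i).choose (i+k+1) := by norm_num [add_assoc]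
      have g2 : ((2*i).choose (i+(k+1)+1) : ℤ) = (2*i).choose (i+k+2) := by norm_num [add_assoc]
      have g3 : ((2*i).choose (i+(k+2)) : ℤ) = (2*i).choose (i+k+2) := by norm_num [add_assoc]
      have g4 : ((2*i).choose (i+(k+2)+1) : ℤ) = (2*i).choose (i+k+3) := by norm_num [add_assoc]
      linarith

lemma a_zero_of_lt {i k : ℕ} (h : i < k) : a i k = 0 := by
  rw [a_closed, Nat.choose_eq_zero_of_lt (by omega), Nat.choose_eq_zero_of_lt (by omega)]
  simp

lemma a_diag (i : ℕ) : a i i = 1 := by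
  rw [a_closed, show i+i = 2*i from by ring, Nat.choose_self,
    Nat.choose_eq_zero_of_lt (by omega)]
  simp

lemma a_zero_right (m : ℕ) : a m 0 = catalan m := by
  rw [a_closed]
  have h1 : ((m:ℤ)+1) * catalan m = (2*m).choose m := by
    exact_mod_cast congrArg (Nat.cast : ℕ → ℤ) (succ_mul_catalan_eq_centralBinom m)
  have h2 : ((2*m).choose (m+1) : ℤ) * ((m:ℤ)+1) = ((2*m).choose m : ℤ) * m := by
    have := Nat.choose_succ_right_eq (2*m) m
    rw [show 2*m - m = m from by omega] at this
    exact_mod_cast congrArg (Nat.cast : ℕ → ℤ) this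
  have hm : ((m:ℤ)+1) ≠ 0 := by positivity
  have key : ((m:ℤ)+1) * (((2*m).choose (m+0) : ℤ) - ((2*m).choose (m+0+1) : ℤ))
      = ((m:ℤ)+1) * (catalan m : ℤ) := by
    rw [show m+0 = m from rfl]
    linear_combination -h1 - h2
  exact mul_left_cancel₀ hm key

lemma shiftZ (f : ℕ → ℤ) (M : ℕ) (h : f M = 0) :
    ∑ k ∈ Finset.range M, f (k+1) = ∑ k ∈ Finset.range M, f k - f 0 := by
  have h1 := Finset.sum_range_succ' f M
  have h2 := Finset.sum_range_succ f M
  rw [h] at h2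
  linarith

lemma swap_lemma (i j M : ℕ) (hi : i < M) (hj : j < M) :
    ∑ k ∈ Finset.range (M+1), a i k * a (j+1) k
      = ∑ k ∈ Finset.range (M+1), a (i+1) k * a j k := by
  rw [Finset.sum_range_succ' (fun k => a i k * a (j+1) k) M,
    Finset.sum_range_succ' (fun k => a (i+1) k * a j k) M]
  simp only [show ∀ m l, a (m+1) (l+1) = a m l + 2 * a m (l+1) + a m (l+2) from fun m l => rfl,
    show ∀ m, a (m+1) 0 = a m 0 + a m 1 from fun m => rfl]
  simp only [mul_add, add_mul, Finset.sum_add_distrib, mul_comm, mul_assoc, mul_left_comm]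
  have sC : ∑ k ∈ Finset.range M, a i (k+1) * a j (k+2)
      = ∑ k ∈ Finset.range M, a i k * a j (k+1) - a i 0 * a j 1 := by
    have := shiftZ (fun k => a i k * a j (k+1)) M (by
      simp [a_zero_of_lt (show i < M from hi)])
    simpa using this
  have sC' : ∑ k ∈ Finset.range M, a i (k+2) * a j (k+1)
      = ∑ k ∈ Finset.range M, a i (k+1) * a j k - a i 1 * a j 0 := by
    have := shiftZ (fun k => a i (k+1) * a j k) M (by
      simp [a_zero_of_lt (show j < M from hj)])
    simpa using this
  have c1 : ∑ x ∈ Finset.range M, a j x * a i (x+1)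
      = ∑ x ∈ Finset.range M, a i (x+1) * a j x :=
    Finset.sum_congr rfl (fun x _ => mul_comm _ _)
  have c2 : ∑ x ∈ Finset.range M, a j (x+1) * a i (x+2)
      = ∑ x ∈ Finset.range M, a i (x+2) * a j (x+1) :=
    Finset.sum_congr rfl (fun x _ => mul_comm _ _)
  linarith [sC, sC', c1, c2]

lemma key_lemma : ∀ j i, ∑ k ∈ Finset.range (i+j+1), a i k * a j k = catalan (i+j) := by
  intro j
  induction j with
  | zero =>
    intro i
    have : ∑ k ∈ Finset.range (i+0+1), a i k * a 0 k = a i 0 * a 0 0 := by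
      apply Finset.sum_eq_single 0
      · intro b _ hb
        match b, hb with
        | m+1, _ => show a i (m+1) * 0 = 0; ring
      · intro h; exact absurd (Finset.mem_range.2 (by omega)) h
    rw [this, show a 0 0 = 1 from rfl, mul_one, a_zero_right]; norm_num
  | succ j ih =>
    intro i
    rw [show i+(j+1)+1 = (i+j+1)+1 from by ring]
    rw [swap_lemma i j (i+j+1) (by omega) (by omega)]
    have := ih (i+1)
    rw [show (i+1)+j+1 = (i+j+1)+1 from by ring] at this
    rw [this, show i+1+j = i+(j+1) from by ring]

lemma key' (i j N : ℕ) (hi : i < N) :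
    ∑ k ∈ Finset.range N, a i k * a j k = catalan (i+j) := by
  have big : ∀ L₁ L₂ : ℕ, L₁ ≤ L₂ → i < L₁ →
      ∑ k ∈ Finset.range L₂, a i k * a j k = ∑ k ∈ Finset.range L₁, a i k * a j k := by
    intro L₁ L₂ h hL
    symm
    apply Finset.sum_subset (Finset.range_subset_range.2 h)
    intro x hx hnx
    rw [a_zero_of_lt (show i < x by
      simp only [Finset.mem_range, not_lt] at hnx ⊢; omega), zero_mul]
  rcases le_or_gt N (i+j+1) with h | h
  · rw [← big N (i+j+1) h hi, key_lemma]
  · rw [big (i+j+1) N (le_of_lt h) (by omega), key_lemma]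

theorem stmt_6 (n : ℕ) (hn : 0 < n) :
    Matrix.det (Matrix.of fun i j : Fin n => (catalan (i.1 + j.1) : ℤ)) = 1 := by
  set B : Matrix (Fin n) (Fin n) ℤ := Matrix.of (fun i k : Fin n => a i.1 k.1) with hB
  have hM : (Matrix.of fun i j : Fin n => (catalan (i.1 + j.1) : ℤ)) = B * B.transpose := by
    ext i j
    simp only [Matrix.mul_apply, Matrix.transpose_apply, hB, Matrix.of_apply]
    rw [Fin.sum_univ_eq_sum_range (fun k => a i.1 k * a j.1 k) n]
    exact (key' i.1 j.1 n i.isLt).symm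
  have hdet : B.det = 1 := by
    rw [Matrix.det_of_lowerTriangular B (fun i j hij => by
      exact a_zero_of_lt (show i.1 < j.1 from hij))]
    simp [hB, a_diag]
  rw [hM, Matrix.det_mul, Matrix.det_transpose, hdet]
  norm_num
end

section
/- The shifted Hankel determinant det(C_{i+j+1})_{i,j=0}^{n-1} of Catalan numbers equals 1 for every positive integer n. -/
/-- Ballot numbers: number of nonnegative lattice paths of `2n+1` steps ending at height `2k+1`. -/
def fcat (n k : ℕ) : ℤ :=
  ((2 * n + 1).choose (n + 1 + k) : ℤ) - ((2 * n + 1).choose (n + 2 + k) : ℤ)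

lemma fcat_eq_zero {n k : ℕ} (h : n < k) : fcat n k = 0 := by
  unfold fcat
  rw [Nat.choose_eq_zero_of_lt (by omega), Nat.choose_eq_zero_of_lt (by omega)]
  simp

lemma fcat_diag (n : ℕ) : fcat n n = 1 := by
  unfold fcat
  rw [show n + 1 + n = 2 * n + 1 by ring, Nat.choose_self,
    Nat.choose_eq_zero_of_lt (by omega)]
  simp

lemma pascal2 (n k : ℕ) :
    (n + 2).choose (k + 2) = n.choose k + 2 * n.choose (k + 1) + n.choose (k + 2) := by
  simp [Nat.choose_succ_succ]
  ring

lemma frec (n k : ℕ) :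
    fcat (n + 1) (k + 1) = fcat n (k + 2) + 2 * fcat n (k + 1) + fcat n k := by
  unfold fcat
  have h1 : 2 * (n + 1) + 1 = (2 * n + 1) + 2 := by ring
  have h2 : (n + 1) + 1 + (k + 1) = (n + 1 + k) + 2 := by ring
  have h3 : (n + 1) + 2 + (k + 1) = (n + 2 + k) + 2 := by ring
  rw [h1, h2, h3, pascal2, pascal2]
  have e1 : n + 1 + k + 1 = n + 2 + k := by ring
  have e2 : n + 1 + k + 2 = n + 1 + (k + 2) := by ring
  have e3 : n + 2 + k + 1 = n + 1 + (k + 2) := by ring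
  have e4 : n + 2 + k + 2 = n + 2 + (k + 2) := by ring
  have e5 : n + 1 + (k + 1) = n + 2 + k := by ring
  have e6 : n + 2 + (k + 1) = n + 1 + (k + 2) := by ring
  rw [e1, e2, e3, e4]
  push_cast
  ring

lemma frec0 (n : ℕ) : fcat (n + 1) 0 = fcat n 1 + 2 * fcat n 0 := by
  unfold fcat
  have h1 : 2 * (n + 1) + 1 = (2 * n + 1) + 2 := by ring
  have h2 : (n + 1) + 1 + 0 = n + 2 := by ring
  have h3 : (n + 1) + 2 + 0 = (n + 1) + 2 := by ring
  rw [h1, h2, h3, show n + 2 = n + 2 from rfl]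
  rw [show (2 * n + 1 + 2).choose (n + 2) = ((2*n+1)+2).choose (n + 2) from rfl]
  have p1 := pascal2 (2 * n + 1) n
  have p2 := pascal2 (2 * n + 1) (n + 1)
  have hsymm : (2 * n + 1).choose n = (2 * n + 1).choose (n + 1) := by
    have := Nat.choose_symm (n := 2 * n + 1) (k := n) (by omega)
    rw [show 2 * n + 1 - n = n + 1 by omega] at this
    omega
  have e1 : n + 1 + 1 = n + 2 := rfl
  have e2 : n + 1 + 2 = n + 3 := rfl
  rw [e1, e2] at p2
  rw [p1, p2]
  rw [show n + 1 + 0 = n + 1 from rfl, show n + 2 + 0 = n + 2 from rfl,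
    show n + 1 + 1 = n + 2 from rfl, show n + 2 + 1 = n + 3 from rfl]
  push_cast [hsymm]
  ring

lemma shift (m p R : ℕ) (hm : m + 2 ≤ R) (hp : p + 2 ≤ R) :
    ∑ k ∈ Finset.range R, fcat (m + 1) k * fcat p k
      = ∑ k ∈ Finset.range R, fcat m k * fcat (p + 1) k := by
  obtain ⟨r, rfl⟩ : ∃ r, R = r + 1 := ⟨R - 1, by omega⟩
  have hmz : fcat m r = 0 := fcat_eq_zero (by omega)
  have hmz' : fcat m (r + 1) = 0 := fcat_eq_zero (by omega)
  set a := ∑ k ∈ Finset.range r, fcat m (k + 2) * fcat p (k + 1) with ha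
  set b := ∑ k ∈ Finset.range r, fcat m (k + 1) * fcat p (k + 1) with hb
  set c := ∑ k ∈ Finset.range r, fcat m k * fcat p (k + 1) with hc
  set a' := ∑ k ∈ Finset.range r, fcat m (k + 1) * fcat p (k + 2) with ha'
  set c' := ∑ k ∈ Finset.range r, fcat m (k + 1) * fcat p k with hc'
  have hL : ∑ k ∈ Finset.range (r + 1), fcat (m + 1) k * fcat p k
      = fcat m 1 * fcat p 0 + 2 * (fcat m 0 * fcat p 0) + (a + 2 * b + c) := by
    rw [Finset.sum_range_succ' (fun k => fcat (m + 1) k * fcat p k) r, frec0]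
    have hsplit : ∑ k ∈ Finset.range r, fcat (m + 1) (k + 1) * fcat p (k + 1)
        = a + 2 * b + c := by
      rw [ha, hb, hc, Finset.mul_sum, ← Finset.sum_add_distrib, ← Finset.sum_add_distrib]
      refine Finset.sum_congr rfl fun k _ => ?_
      rw [frec]; ring
    rw [hsplit]; ring
  have hR : ∑ k ∈ Finset.range (r + 1), fcat m k * fcat (p + 1) k
      = fcat m 0 * fcat p 1 + 2 * (fcat m 0 * fcat p 0) + (a' + 2 * b + c') := by
    rw [Finset.sum_range_succ' (fun k => fcat m k * fcat (p + 1) k) r, frec0]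
    have hsplit : ∑ k ∈ Finset.range r, fcat m (k + 1) * fcat (p + 1) (k + 1)
        = a' + 2 * b + c' := by
      rw [ha', hb, hc', Finset.mul_sum, ← Finset.sum_add_distrib, ← Finset.sum_add_distrib]
      refine Finset.sum_congr rfl fun k _ => ?_
      rw [frec]; ring
    rw [hsplit]; ring
  have key1 : fcat m 1 * fcat p 0 + a = c' := by
    have h1 : c' = ∑ k ∈ Finset.range (r + 1), fcat m (k + 1) * fcat p k := by
      rw [Finset.sum_range_succ, hmz']; ring
    rw [h1, Finset.sum_range_succ' (fun k => fcat m (k + 1) * fcat p k) r]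
    have h2 : ∑ k ∈ Finset.range r, fcat m (k + 1 + 1) * fcat p (k + 1) = a := by
      refine Finset.sum_congr rfl fun k _ => ?_
      norm_num
    rw [h2]
    norm_num [add_comm]
  have key2 : fcat m 0 * fcat p 1 + a' = c := by
    have h1 : c = ∑ k ∈ Finset.range (r + 1), fcat m k * fcat p (k + 1) := by
      rw [Finset.sum_range_succ, hmz]; ring
    rw [h1, Finset.sum_range_succ' (fun k => fcat m k * fcat p (k + 1)) r]
    have h2 : ∑ k ∈ Finset.range r, fcat m (k + 1) * fcat p (k + 1 + 1) = a' := by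
      refine Finset.sum_congr rfl fun k _ => ?_
      norm_num
    rw [h2]
    norm_num [add_comm]
  rw [hL, hR]
  linarith

lemma fcat_zero' (m : ℕ) : fcat m 0 = (catalan (m + 1) : ℤ) := by
  have hcancel : (m + 2 : ℤ) ≠ 0 := by positivity
  have hcb : (m + 2) * catalan (m + 1) = (2 * m + 2).choose (m + 1) := by
    have := succ_mul_catalan_eq_centralBinom (m + 1)
    rwa [Nat.centralBinom, show 2 * (m + 1) = 2 * m + 2 by ring] at this
  have hsr := Nat.choose_succ_right_eq (2 * m + 1) (m + 1)
  rw [show 2 * m + 1 - (m + 1) = m by omega] at hsr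
  have hsymm : (2 * m + 1).choose m = (2 * m + 1).choose (m + 1) := by
    have := Nat.choose_symm (n := 2 * m + 1) (k := m) (by omega)
    rw [show 2 * m + 1 - m = m + 1 by omega] at this
    omega
  have hpas : (2 * m + 2).choose (m + 1)
      = (2 * m + 1).choose m + (2 * m + 1).choose (m + 1) := by
    rw [show 2 * m + 2 = (2 * m + 1) + 1 from rfl]
    exact Nat.choose_succ_succ _ _
  refine mul_left_cancel₀ hcancel ?_
  unfold fcat
  rw [show m + 1 + 0 = m + 1 from rfl, show m + 2 + 0 = m + 1 + 1 from rfl]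
  have hsr' : ((2 * m + 1).choose (m + 1 + 1) : ℤ) * (m + 2)
      = ((2 * m + 1).choose (m + 1) : ℤ) * m := by exact_mod_cast hsr
  have hcb' : ((m : ℤ) + 2) * (catalan (m + 1) : ℤ) = ((2 * m + 2).choose (m + 1) : ℤ) := by
    exact_mod_cast hcb
  have hpas' : ((2 * m + 2).choose (m + 1) : ℤ)
      = ((2 * m + 1).choose m : ℤ) + ((2 * m + 1).choose (m + 1) : ℤ) := by
    exact_mod_cast hpas
  have hsymm' : ((2 * m + 1).choose m : ℤ) = ((2 * m + 1).choose (m + 1) : ℤ) := by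
    exact_mod_cast hsymm
  push_cast
  linarith

lemma conv (p : ℕ) : ∀ m R : ℕ, m + p + 2 ≤ R →
    ∑ k ∈ Finset.range R, fcat m k * fcat p k = (catalan (m + p + 1) : ℤ) := by
  induction p with
  | zero =>
    intro m R hR
    rw [Finset.sum_eq_single_of_mem 0 (Finset.mem_range.2 (by omega))]
    · rw [fcat_diag, fcat_zero']
      ring
    · intro b _ hb
      rw [fcat_eq_zero (Nat.pos_of_ne_zero hb)]
      ring
  | succ p ih =>
    intro m R hR
    rw [← shift m p R (by omega) (by omega), ih (m + 1) R (by omega),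
      show m + 1 + p + 1 = m + (p + 1) + 1 by ring]

theorem stmt_7 (n : ℕ) (hn : 0 < n) :
    Matrix.det (Matrix.of fun i j : Fin n => (catalan (i.1 + j.1 + 1) : ℤ)) = 1 := by
  set L : Matrix (Fin n) (Fin n) ℤ := Matrix.of fun i j => fcat i.1 j.1 with hLdef
  have hM : (Matrix.of fun i j : Fin n => (catalan (i.1 + j.1 + 1) : ℤ)) = L * L.transpose := by
    ext i j
    simp only [Matrix.mul_apply, Matrix.transpose_apply, Matrix.of_apply, hLdef]
    rw [Fin.sum_univ_eq_sum_range (fun k => fcat i.1 k * fcat j.1 k) n]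
    set R := max n (i.1 + j.1 + 2) with hRdef
    have h1 : ∑ k ∈ Finset.range n, fcat i.1 k * fcat j.1 k
        = ∑ k ∈ Finset.range R, fcat i.1 k * fcat j.1 k := by
      refine Finset.sum_subset (Finset.range_subset_range.2 (le_max_left _ _)) ?_
      intro k _ hk
      rw [fcat_eq_zero (show i.1 < k by
        have := Finset.mem_range.not.1 hk
        omega)]
      ring
    rw [h1, conv j.1 i.1 R (le_max_right _ _)]
  rw [hM, Matrix.det_mul, Matrix.det_transpose]
  have hLtri : L.BlockTriangular OrderDual.toDual := by
    intro i j hij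
    exact fcat_eq_zero hij
  have hdet : L.det = 1 := by
    rw [Matrix.det_of_lowerTriangular L hLtri]
    simp [hLdef, fcat_diag]
  rw [hdet]
  ring
end

section
/- For all positive integers n and k: Π_{1 ≤ i ≤ j ≤ n-1} (2k+i+j)/(i+j) = Π_{j=1}^{n-1} C(2k+2j, j)/C(2j, j). -/
lemma aux_prod (m j : ℕ) : ∏ i ∈ Finset.Icc 1 j, (m + i) = j.factorial * (m + j).choose j := by
  rw [← Nat.ascFactorial_eq_factorial_mul_choose]
  induction j with
  | zero => simp
  | succ j ih =>
      rw [Finset.prod_Icc_succ_top (by omega), ih, Nat.ascFactorial_succ, mul_comm]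
      ring

theorem stmt_10 (n k : ℕ) (hn : 0 < n) (hk : 0 < k) :
    (∏ j ∈ Finset.Icc 1 (n - 1), ∏ i ∈ Finset.Icc 1 j,
        ((2 * k + i + j : ℕ) : ℚ) / ((i + j : ℕ) : ℚ)) =
      ∏ j ∈ Finset.Icc 1 (n - 1),
        (((2 * k + 2 * j).choose j : ℕ) : ℚ) / (((2 * j).choose j : ℕ) : ℚ) := by
  refine Finset.prod_congr rfl fun j _ => ?_
  rw [Finset.prod_div_distrib, ← Nat.cast_prod, ← Nat.cast_prod]
  have h1 : ∏ i ∈ Finset.Icc 1 j, (2 * k + i + j) = ∏ i ∈ Finset.Icc 1 j, (2 * k + j + i) :=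
    Finset.prod_congr rfl fun i _ => by ring
  have h2 : ∏ i ∈ Finset.Icc 1 j, (i + j) = ∏ i ∈ Finset.Icc 1 j, (j + i) :=
    Finset.prod_congr rfl fun i _ => by ring
  rw [h1, h2, aux_prod, aux_prod]
  have : 2 * k + j + j = 2 * k + 2 * j := by ring
  rw [this, ← two_mul j]
  push_cast
  rw [mul_div_mul_left _ _ (by exact_mod_cast j.factorial_ne_zero)]
end

section
/- The polynomials H_n(x) = Π_{j=1}^{n-1} C(2x+2j, j)/C(2j, j) (where C(2x+2j, j) means Π_{i=0}^{j-1}(2x+2j-i)/j!) satisfy the Dodgson condensation identity H_n(x)·H_{n+2}(x-2) - H_n(x-1)·H_{n+2}(x-1) + H_{n+1}(x-1)^2 = 0 for all n ≥ 0. -/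
open Polynomial Finset

/-- Hₙ(x) = Π_{j=1}^{n-1} [Π_{i=0}^{j-1} (2x + 2j - i)] / (j! · C(2j,j)). -/
noncomputable def HPoly (n : ℕ) : Polynomial ℚ :=
  ∏ j ∈ Finset.Icc 1 (n - 1),
    (Polynomial.C (((j.factorial * (2 * j).choose j : ℕ) : ℚ))⁻¹ *
      ∏ i ∈ Finset.range j, (2 * X + Polynomial.C (((2 * j - i : ℕ) : ℚ))))

/- Auxiliary rising-factorial-style products. -/
noncomputable def fs (n : ℕ) (a : ℚ) : ℚ[X] :=
  ∏ i ∈ Finset.range n, (2 * X + C (a + i))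

noncomputable def cQ (n : ℕ) : ℚ := (((n.factorial * (2 * n).choose n : ℕ) : ℚ))⁻¹

noncomputable def gP (j : ℕ) : ℚ[X] :=
  C (cQ j) * ∏ i ∈ Finset.range j, (2 * X + C (((2 * j - i : ℕ) : ℚ)))

lemma HPoly_eq (n : ℕ) : HPoly n = ∏ j ∈ Finset.Icc 1 (n - 1), gP j := rfl

lemma fs_zero (a : ℚ) : fs 0 a = 1 := by simp [fs]

lemma fs_succ (n : ℕ) (a : ℚ) : fs (n + 1) a = fs n a * (2 * X + C (a + n)) := by
  simp [fs, prod_range_succ]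

lemma fs_succ' (n : ℕ) (a : ℚ) : fs (n + 1) a = (2 * X + C a) * fs n (a + 1) := by
  rw [fs, prod_range_succ']
  rw [mul_comm]
  congr 1
  · push_cast; ring_nf
  · refine Finset.prod_congr rfl fun i _ => ?_
    congr 1
    push_cast
    ring

lemma lin_comp (c b : ℚ) : (2 * X + C c).comp (X - C b) = 2 * X + C (c - 2 * b) := by
  simp only [add_comp, mul_comp, X_comp, C_comp, ofNat_comp, map_sub, map_mul, map_ofNat]
  ring

lemma fs_comp (n : ℕ) (a b : ℚ) : (fs n a).comp (X - C b) = fs n (a - 2 * b) := by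
  induction n with
  | zero => simp [fs]
  | succ k ih =>
    rw [fs_succ, mul_comp, ih, lin_comp, fs_succ]
    congr 2
    ring

lemma two_X_add_C_ne (a : ℚ) : (2 * X + C a : ℚ[X]) ≠ 0 := by
  intro h
  have h0 := congrArg (eval 0) h
  have h1 := congrArg (eval 1) h
  simp at h0 h1
  rw [h0] at h1
  norm_num at h1

lemma fs_ne_zero (n : ℕ) (a : ℚ) : fs n a ≠ 0 := by
  unfold fs
  rw [Finset.prod_ne_zero_iff]
  exact fun i _ => two_X_add_C_ne _

lemma inner_eq (j : ℕ) :
    (∏ i ∈ Finset.range j, (2 * X + C (((2 * j - i : ℕ) : ℚ)))) = fs j ((j : ℚ) + 1) := by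
  rw [fs, ← Finset.prod_range_reflect]
  refine Finset.prod_congr rfl fun i hi => ?_
  rw [Finset.mem_range] at hi
  congr 1
  have h : 2 * j - (j - 1 - i) = j + 1 + i := by omega
  rw [h]
  push_cast
  ring

lemma gP_eq (j : ℕ) : gP j = C (cQ j) * fs j ((j : ℚ) + 1) := by
  rw [gP, inner_eq]

lemma cQ_zero : cQ 0 = 1 := by simp [cQ]

lemma cQ_ne (n : ℕ) : cQ n ≠ 0 := by
  unfold cQ
  apply inv_ne_zero
  rw [Nat.cast_ne_zero]
  exact Nat.mul_ne_zero n.factorial_ne_zero (Nat.choose_pos (by omega)).ne'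

lemma cQ_rel (n : ℕ) : cQ n = cQ (n + 1) * (2 * (2 * (n : ℚ) + 1)) := by
  have hnat : ((n+1).factorial * (2*(n+1)).choose (n+1) : ℕ)
      = (n.factorial * (2*n).choose n) * (2*(2*n+1)) := by
    have h := Nat.succ_mul_centralBinom_succ n
    simp only [Nat.centralBinom] at h
    rw [Nat.factorial_succ]
    calc (n+1) * n.factorial * (2*(n+1)).choose (n+1)
        = n.factorial * ((n+1) * (2*(n+1)).choose (n+1)) := by ring
      _ = n.factorial * (2 * (2*n+1) * (2*n).choose n) := by rw [h]
      _ = n.factorial * (2*n).choose n * (2*(2*n+1)) := by ring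
  have hA : (((n.factorial * (2*n).choose n : ℕ) : ℚ)) ≠ 0 := by
    rw [Nat.cast_ne_zero]
    exact Nat.mul_ne_zero n.factorial_ne_zero (Nat.choose_pos (by omega)).ne'
  unfold cQ
  rw [hnat]
  push_cast
  have hk : (2 * (2 * (n : ℚ) + 1)) ≠ 0 := by positivity
  push_cast at hA
  field_simp

lemma HPoly_succ (n : ℕ) : HPoly (n + 1) = HPoly n * gP n := by
  cases n with
  | zero => simp [HPoly_eq, gP, cQ_zero]
  | succ k =>
    rw [HPoly_eq, HPoly_eq]
    have h : (k + 1 + 1) - 1 = (k + 1 - 1) + 1 := rfl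
    rw [h]
    exact Finset.prod_Icc_succ_top (Nat.succ_le_succ (Nat.zero_le k)) _

lemma HPoly_one : HPoly 1 = 1 := by simp [HPoly_eq]

lemma HPoly_ne (n : ℕ) : HPoly n ≠ 0 := by
  rw [HPoly_eq, Finset.prod_ne_zero_iff]
  intro j _
  rw [gP_eq]
  exact mul_ne_zero (C_ne_zero.mpr (cQ_ne j)) (fs_ne_zero _ _)

lemma comp_ne_zero' {p : ℚ[X]} (b : ℚ) (hp : p ≠ 0) : p.comp (X - C b) ≠ 0 := by
  intro h
  apply hp
  have h2 : (p.comp (X - C b)).comp (X + C b) = p := by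
    rw [Polynomial.comp_assoc]
    simp
  rw [h, zero_comp] at h2
  exact h2.symm

lemma lemB (n : ℕ) : (HPoly (n + 1)).comp (X - C 1) = C (cQ n) * fs n 0 * HPoly n := by
  induction n with
  | zero => simp [HPoly_one, HPoly_eq, cQ_zero, fs_zero]
  | succ k ih =>
    rw [HPoly_succ (k+1), mul_comp, ih, gP_eq, mul_comp, C_comp, fs_comp]
    rw [HPoly_succ k, gP_eq]
    rw [show ((k+1 : ℕ) : ℚ) + 1 - 2*1 = (k:ℚ) by push_cast; ring]
    rw [fs_succ' k (k:ℚ)]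
    rw [show fs (k+1) 0 = fs k 0 * (2*X + C (0 + (k:ℚ))) from fs_succ k 0]
    rw [zero_add]
    ring

lemma lemC (n : ℕ) : (HPoly (n+2)).comp (X - C 2)
    = C (cQ (n+1)) * (2*X - C 2) * fs n (-1) * ((HPoly (n+1)).comp (X - C 1)) := by
  induction n with
  | zero =>
    rw [show (0:ℕ)+2 = 1+1 from rfl, HPoly_succ 1, HPoly_one, one_mul, gP_eq, mul_comp,
      C_comp, fs_comp, one_comp]
    rw [show ((1 : ℕ) : ℚ) + 1 - 2*2 = -2 by norm_num]
    rw [fs_succ 0 (-2), fs_zero, one_mul, fs_zero]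
    simp only [Nat.cast_zero, add_zero]
    simp only [map_neg, map_ofNat]
    ring
  | succ k ih =>
    rw [show k+1+2 = (k+2)+1 from rfl, HPoly_succ (k+2), mul_comp, ih, gP_eq, mul_comp,
      C_comp, fs_comp]
    rw [show ((k+2 : ℕ) : ℚ) + 1 - 2*2 = (k:ℚ) - 1 by push_cast; ring]
    rw [HPoly_succ (k+1), mul_comp, gP_eq, mul_comp, C_comp, fs_comp]
    rw [show ((k+1 : ℕ) : ℚ) + 1 - 2*1 = (k:ℚ) by push_cast; ring]
    have e1 : fs (k+2) ((k:ℚ)-1) = (2*X + C ((k:ℚ)-1)) * fs (k+1) ((k:ℚ)-1+1) := fs_succ' (k+1) _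
    rw [show (k:ℚ)-1+1 = (k:ℚ) by ring] at e1
    rw [e1, fs_succ k (-1)]
    simp only [map_sub, map_add, map_neg, map_one, map_natCast]
    ring

lemma lemD (n : ℕ) :
    C (2*(2*(n:ℚ)+1)) * fs n 0 * fs n ((n:ℚ)-1)
      + (2*X - C 2) * fs n (-1) * fs n ((n:ℚ)-1)
      - fs n 0 * fs (n+1) (n:ℚ) = 0 := by
  have hfac : (2*X + C ((n:ℚ)-1) : ℚ[X]) ≠ 0 := two_X_add_C_ne _
  have e1 : fs n (-1) * (2*X + C ((n:ℚ)-1)) = (2*X + C (-1)) * fs n 0 := by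
    have a1 := fs_succ n (-1)
    have a2 := fs_succ' n (-1)
    rw [show (-1:ℚ)+1 = 0 by norm_num] at a2
    rw [show (-1 + (n:ℚ)) = (n:ℚ)-1 by ring] at a1
    linear_combination a2 - a1
  have e2 : fs (n+1) (n:ℚ) * (2*X + C ((n:ℚ)-1))
      = fs n ((n:ℚ)-1) * ((2*X + C (2*(n:ℚ)-1)) * (2*X + C (2*(n:ℚ)))) := by
    have b1 := fs_succ' (n+1) ((n:ℚ)-1)
    have b2 := fs_succ (n+1) ((n:ℚ)-1)
    have b3 := fs_succ n ((n:ℚ)-1)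
    rw [show (n:ℚ)-1+1 = (n:ℚ) by ring] at b1
    rw [show (n:ℚ)-1+((n+1:ℕ):ℚ) = 2*(n:ℚ) by push_cast; ring] at b2
    rw [show (n:ℚ)-1+(n:ℚ) = 2*(n:ℚ)-1 by ring] at b3
    linear_combination b2 - b1 + (2*X + C (2*(n:ℚ))) * b3
  have key : (C (2*(2*(n:ℚ)+1)) * fs n 0 * fs n ((n:ℚ)-1)
      + (2*X - C 2) * fs n (-1) * fs n ((n:ℚ)-1)
      - fs n 0 * fs (n+1) (n:ℚ)) * (2*X + C ((n:ℚ)-1)) = 0 := by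
    simp only [map_sub, map_add, map_mul, map_neg, map_one, map_ofNat, map_natCast] at e1 e2 ⊢
    linear_combination ((2*X - 2) * fs n ((n:ℚ)-1)) * e1 - (fs n 0) * e2
  rcases mul_eq_zero.mp key with h | h
  · exact h
  · exact absurd h hfac

theorem stmt_11 (n : ℕ) :
    HPoly n * (HPoly (n + 2)).comp (X - 2) -
        (HPoly n).comp (X - 1) * (HPoly (n + 2)).comp (X - 1) +
      ((HPoly (n + 1)).comp (X - 1)) ^ 2 = 0 := by
  rw [show (X - 2 : ℚ[X]) = X - C 2 by rw [map_ofNat],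
    show (X - 1 : ℚ[X]) = X - C 1 by rw [map_one]]
  set a1 := (HPoly n).comp (X - C 1) with ha1d
  set b1 := (HPoly (n+1)).comp (X - C 1) with hb1d
  have hb1 : b1 = a1 * (C (cQ n) * fs n ((n:ℚ)-1)) := by
    rw [hb1d, ha1d, HPoly_succ n, mul_comp, gP_eq, mul_comp, C_comp, fs_comp,
      show (n:ℚ) + 1 - 2*1 = (n:ℚ)-1 by ring]
  have h2 : (HPoly (n+2)).comp (X - C 1) = b1 * (C (cQ (n+1)) * fs (n+1) (n:ℚ)) := by
    rw [show n+2 = (n+1)+1 from rfl, HPoly_succ (n+1), mul_comp, gP_eq, mul_comp, C_comp,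
      fs_comp, show ((n+1:ℕ):ℚ) + 1 - 2*1 = (n:ℚ) by push_cast; ring, hb1d]
  have h3 : (HPoly (n+2)).comp (X - C 2)
      = C (cQ (n+1)) * (2*X - C 2) * fs n (-1) * b1 := lemC n
  have hB : b1 = C (cQ n) * fs n 0 * HPoly n := lemB n
  have hE : a1 * fs n ((n:ℚ)-1) = fs n 0 * HPoly n := by
    have hcne : (C (cQ n) : ℚ[X]) ≠ 0 := C_ne_zero.mpr (cQ_ne n)
    apply mul_left_cancel₀ hcne
    linear_combination hB - hb1
  have hcC : C (cQ n) = C (cQ (n+1)) * C (2*(2*(n:ℚ)+1)) := by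
    rw [← map_mul]; exact congrArg C (cQ_rel n)
  have hD := lemD n
  have ha1 : a1 ≠ 0 := comp_ne_zero' 1 (HPoly_ne n)
  have key : a1 * (HPoly n * (HPoly (n + 2)).comp (X - C 2) -
      a1 * (HPoly (n + 2)).comp (X - C 1) + b1 ^ 2) = 0 := by
    linear_combination (a1 * HPoly n) * h3 - (a1 * a1) * h2
      + (a1 * HPoly n * C (cQ (n+1)) * (2*X - C 2) * fs n (-1)
          - a1 * a1 * C (cQ (n+1)) * fs (n+1) (n:ℚ)
          + a1 * (b1 + a1 * (C (cQ n) * fs n ((n:ℚ)-1)))) * hb1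
      + (a1 * a1 * C (cQ n) * C (cQ n) * fs n ((n:ℚ)-1)
          - a1 * a1 * C (cQ n) * C (cQ (n+1)) * fs (n+1) (n:ℚ)) * hE
      + (a1 * a1 * C (cQ n) * fs n ((n:ℚ)-1) * fs n 0 * HPoly n) * hcC
      + (a1 * a1 * HPoly n * C (cQ n) * C (cQ (n+1))) * hD
  rcases mul_eq_zero.mp key with h | h
  · exact absurd h ha1
  · exact h
end

section
/- Let a : ℕ → R be a sequence in a commutative ring and u(n,k) = det(a_{n+i+j})_{i,j=0}^{k-1}. Then for all n ≥ 0 and k ≥ 2: u(n,k)·u(n+2,k-2) - u(n+2,k-1)·u(n,k-1) + u(n+1,k-1)^2 = 0. -/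
/-!
The identity is Dodgson condensation (the Desnanot–Jacobi identity)
`det A · det A° = det A↖ · det A↘ - det A↗ · det A↙` for a square matrix `A` of size
`m + 2`, where `A°` deletes the first and last rows and columns and the four corner minors
delete one of each; for the Hankel matrix `(a (n + i + j))` these minors are again Hankel
determinants with shifted `n`.

To prove Desnanot–Jacobi, let `C` be the identity matrix with its first and last rows replaced by
the corresponding rows of `adj A`. Then `C * A` is `A` with those rows replaced by `det A • e₀`
and `det A • e_last`, so `det (C * A) = (det A)² · det A°`, while `det C` is the `2 × 2`
determinant of adjugate entries, i.e. of corner minors. This gives the identity multiplied by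
`det A`, which may be cancelled for the generic matrix over `ℤ[X_ij]` and then specialized.
-/

namespace Matrix

theorem submatrix_updateRow_of_injective {α l m n o : Type*} [DecidableEq l] [DecidableEq m]
    (A : Matrix m n α) {f : l → m} (hf : Function.Injective f) (g : o → n) (i : l)
    (v : n → α) :
    (A.updateRow (f i) v).submatrix f g = (A.submatrix f g).updateRow i (v ∘ g) := by
  ext k j
  simp [updateRow_apply, hf.eq_iff]

section DesnanotJacobi

variable {R : Type*} [CommRing R]

/-- Weinstein–Aronszajn turns this into a `2 × 2` determinant. -/
theorem det_updateRow_updateRow_one {m : Type*} [Fintype m] [DecidableEq m] {i j : m}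
    (hij : i ≠ j) (x y : m → R) :
    (((1 : Matrix m m R).updateRow i x).updateRow j y).det = x i * y j - x j * y i := by
  let U : Matrix m (Fin 2) R := (of ![Pi.single i 1, Pi.single j 1])ᵀ
  let V : Matrix (Fin 2) m R := of ![x - Pi.single i 1, y - Pi.single j 1]
  have hUV : ((1 : Matrix m m R).updateRow i x).updateRow j y = 1 + U * V := by
    ext k l
    rcases eq_or_ne k j with rfl | hkj
    · simp [U, V, mul_apply, Fin.sum_univ_two, Pi.single_apply, hij, one_apply, eq_comm]
    rcases eq_or_ne k i with rfl | hki
    · simp [U, V, mul_apply, Fin.sum_univ_two, Pi.single_apply, hkj, one_apply, eq_comm]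
    · simp [U, V, mul_apply, Fin.sum_univ_two, Pi.single_apply, hkj, hki, one_apply]
  rw [hUV, det_one_add_mul_comm, det_fin_two]
  simp [U, V, vecMul_transpose, hij, hij.symm]

theorem adjugate_vecMul_self {m : Type*} [Fintype m] [DecidableEq m] (A : Matrix m m R)
    (i : m) : A.adjugate i ᵥ* A = A.det • Pi.single i 1 := by
  ext k
  rw [← mul_apply_eq_vecMul, adjugate_mul, smul_apply, one_eq_pi_single, Pi.smul_apply]

theorem det_updateRow_single_self {n : ℕ} (A : Matrix (Fin (n + 1)) (Fin (n + 1)) R)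
    (i : Fin (n + 1)) :
    (A.updateRow i (Pi.single i 1)).det = (A.submatrix i.succAbove i.succAbove).det := by
  rw [← adjugate_apply, adjugate_fin_succ_eq_det_submatrix, ← two_mul, pow_mul, neg_one_sq,
    one_pow, one_mul]

variable {n : ℕ}

theorem det_updateRow_single_zero_last (A : Matrix (Fin (n + 2)) (Fin (n + 2)) R) :
    ((A.updateRow 0 (Pi.single 0 1)).updateRow (Fin.last (n + 1))
      (Pi.single (Fin.last (n + 1)) 1)).det =
      (A.submatrix (fun i : Fin n => i.succ.castSucc) (fun i => i.succ.castSucc)).det := by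
  have hsingle : (Pi.single 0 1 : Fin (n + 2) → R) ∘ Fin.castSucc = Pi.single 0 1 := by
    ext k
    simp [Pi.single_apply]
  rw [det_updateRow_single_self, Fin.succAbove_last, ← Fin.castSucc_zero,
    submatrix_updateRow_of_injective _ (Fin.castSucc_injective _), Fin.castSucc_zero, hsingle,
    det_updateRow_single_self, Fin.succAbove_zero, submatrix_submatrix]
  rfl

theorem det_mul_desnanot_jacobi (A : Matrix (Fin (n + 2)) (Fin (n + 2)) R) :
    A.det * (A.det *
      (A.submatrix (fun i : Fin n => i.succ.castSucc) (fun i => i.succ.castSucc)).det) =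
    A.det * ((A.submatrix Fin.castSucc Fin.castSucc).det * (A.submatrix Fin.succ Fin.succ).det -
      (A.submatrix Fin.castSucc Fin.succ).det * (A.submatrix Fin.succ Fin.castSucc).det) := by
  set L := Fin.last (n + 1)
  have h0L : (0 : Fin (n + 2)) ≠ L := Fin.last_pos.ne
  let C : Matrix (Fin (n + 2)) (Fin (n + 2)) R :=
    ((1 : Matrix _ _ R).updateRow 0 (A.adjugate 0)).updateRow L (A.adjugate L)
  have hC : C.det =
      (A.submatrix Fin.castSucc Fin.castSucc).det * (A.submatrix Fin.succ Fin.succ).det -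
        (A.submatrix Fin.castSucc Fin.succ).det * (A.submatrix Fin.succ Fin.castSucc).det := by
    simp only [C, det_updateRow_updateRow_one h0L, adjugate_fin_succ_eq_det_submatrix, L,
      Fin.succAbove_zero, Fin.succAbove_last, Fin.val_zero, Fin.val_last]
    have hsign : (-1 : R) ^ (n + 1 + (n + 1)) = 1 := Even.neg_one_pow ⟨n + 1, rfl⟩
    linear_combination
      ((A.submatrix Fin.succ Fin.succ).det * (A.submatrix Fin.castSucc Fin.castSucc).det -
        (A.submatrix Fin.castSucc Fin.succ).det * (A.submatrix Fin.succ Fin.castSucc).det) * hsign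
  have hCA : (C * A).det = A.det * (A.det *
      (A.submatrix (fun i : Fin n => i.succ.castSucc) (fun i => i.succ.castSucc)).det) := by
    rw [updateRow_mul, updateRow_mul, Matrix.one_mul, adjugate_vecMul_self, adjugate_vecMul_self,
      det_updateRow_smul, updateRow_comm _ h0L, det_updateRow_smul, updateRow_comm _ h0L.symm,
      det_updateRow_single_zero_last]
  rw [← hCA, ← hC, det_mul, mul_comm]

theorem desnanot_jacobi (A : Matrix (Fin (n + 2)) (Fin (n + 2)) R) :
    A.det * (A.submatrix (fun i : Fin n => i.succ.castSucc) (fun i => i.succ.castSucc)).det =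
      (A.submatrix Fin.castSucc Fin.castSucc).det * (A.submatrix Fin.succ Fin.succ).det -
        (A.submatrix Fin.castSucc Fin.succ).det * (A.submatrix Fin.succ Fin.castSucc).det := by
  let X := mvPolynomialX (Fin (n + 2)) (Fin (n + 2)) ℤ
  have hX := mul_left_cancel₀ (det_mvPolynomialX_ne_zero (Fin (n + 2)) ℤ)
    (det_mul_desnanot_jacobi X)
  have hA := congrArg (MvPolynomial.aeval fun p : Fin (n + 2) × Fin (n + 2) => A p.1 p.2) hX
  simp only [map_mul, map_sub, AlgHom.map_det, AlgHom.mapMatrix_apply, ← submatrix_map] at hA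
  rwa [← AlgHom.mapMatrix_apply, mvPolynomialX_mapMatrix_aeval] at hA

end DesnanotJacobi

def hankel {α : Type*} (a : ℕ → α) (n k : ℕ) : Matrix (Fin k) (Fin k) α :=
  of fun i j => a (n + i + j)

theorem hankel_submatrix {α : Type*} (a : ℕ → α) (n : ℕ) {k l : ℕ} (f g : Fin k → Fin l)
    (p q : ℕ) (hf : ∀ i, (f i : ℕ) = i + p) (hg : ∀ j, (g j : ℕ) = j + q) :
    (hankel a n l).submatrix f g = hankel a (n + p + q) k := by
  ext i j
  simp only [hankel, submatrix_apply, of_apply, hf, hg]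
  congr 1
  omega

theorem det_hankel_condensation {R : Type*} [CommRing R] (a : ℕ → R) (n m : ℕ) :
    (hankel a n (m + 2)).det * (hankel a (n + 2) m).det =
      (hankel a n (m + 1)).det * (hankel a (n + 2) (m + 1)).det -
        (hankel a (n + 1) (m + 1)).det ^ 2 := by
  have key := desnanot_jacobi (hankel a n (m + 2))
  rw [hankel_submatrix a n (fun i : Fin m => i.succ.castSucc) (fun i => i.succ.castSucc) 1 1
      (fun _ => rfl) (fun _ => rfl),
    hankel_submatrix a n Fin.castSucc Fin.castSucc 0 0 (fun _ => rfl) (fun _ => rfl),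
    hankel_submatrix a n Fin.succ Fin.succ 1 1 (fun _ => rfl) (fun _ => rfl),
    hankel_submatrix a n Fin.castSucc Fin.succ 0 1 (fun _ => rfl) (fun _ => rfl),
    hankel_submatrix a n Fin.succ Fin.castSucc 1 0 (fun _ => rfl) (fun _ => rfl)] at key
  simp only [add_zero] at key
  linear_combination key

end Matrix

theorem stmt_12 {R : Type*} [CommRing R] (a : ℕ → R)
    (u : ℕ → ℕ → R)
    (hu : ∀ n k : ℕ, u n k = Matrix.det (Matrix.of fun i j : Fin k => a (n + i.1 + j.1))) :
    ∀ n k : ℕ, 2 ≤ k →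
      u n k * u (n + 2) (k - 2) - u (n + 2) (k - 1) * u n (k - 1) +
        (u (n + 1) (k - 1)) ^ 2 = 0 := by
  intro n k hk
  obtain ⟨m, rfl⟩ : ∃ m, k = m + 2 := ⟨k - 2, by omega⟩
  have hu_hankel : ∀ n k, u n k = (Matrix.hankel a n k).det := hu
  simp only [hu_hankel, Nat.add_sub_cancel, Nat.add_succ_sub_one]
  linear_combination Matrix.det_hankel_condensation a n m
end

section
/- Define the array r(b,n,k) for b ∈ ℚ by r(b,0,k) = [k=0], r(b,n,k) = 0 for k < 0, and r(b,n,k) = r(b,n-1,k-1) + s_k·r(b,n-1,k) + r(b,n-1,k+1) where s_0 = b+1 and s_k = 2 for k > 0. Then r(b,n,k) = Σ_{j=0}^{n-k} C(n+k+1+j, j)·((n+k+1-j)/(n+k+1+j))·b^{n-k-j}. -/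
open Finset

def cc : ℕ → ℕ → ℚ
  | _, 0 => 1
  | m, j+1 => (((m+j+1).choose (j+1) : ℕ) : ℚ) - 2 * (((m+j).choose j : ℕ) : ℚ)

lemma cc_pascal (m j : ℕ) : cc (m+1) (j+1) = cc m (j+1) + cc (m+1) j := by
  match j with
  | 0 => simp [cc]; ring
  | j+1 =>
    simp only [cc]
    have h2 : ((m+j+1)+1).choose (j+1) = (m+j+1).choose j + (m+j+1).choose (j+1) :=
      Nat.choose_succ_succ' _ _
    have q1 : (((m+1+(j+1)+1).choose (j+1+1) : ℕ) : ℚ)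
        = (((m+j+2).choose (j+1) : ℕ) : ℚ) + (((m+j+2).choose (j+2) : ℕ) : ℚ) := by
      rw [show m+1+(j+1)+1 = (m+j+2)+1 by ring, show j+1+1 = j+2 by ring,
        Nat.choose_succ_succ' (m+j+2) (j+1)]
      push_cast; ring
    have q2 : (((m+1+(j+1)).choose (j+1) : ℕ) : ℚ)
        = (((m+j+1).choose j : ℕ) : ℚ) + (((m+j+1).choose (j+1) : ℕ) : ℚ) := by
      rw [show m+1+(j+1) = (m+j+1)+1 by ring, h2]; push_cast; ring
    have q3 : (((m+(j+1)+1).choose (j+1+1) : ℕ) : ℚ) = (((m+j+2).choose (j+2) : ℕ) : ℚ) := by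
      norm_num [show m+(j+1)+1 = m+j+2 by ring, show j+1+1 = j+2 by ring]
    have q4 : (((m+(j+1)).choose (j+1) : ℕ) : ℚ) = (((m+j+1).choose (j+1) : ℕ) : ℚ) := by
      norm_num [show m+(j+1) = m+j+1 by ring]
    have q5 : (((m+1+j+1).choose (j+1) : ℕ) : ℚ)
        = (((m+j+1).choose j : ℕ) : ℚ) + (((m+j+1).choose (j+1) : ℕ) : ℚ) := by
      rw [show m+1+j+1 = (m+j+1)+1 by ring, h2]; push_cast; ring
    have q6 : (((m+1+j).choose j : ℕ) : ℚ) = (((m+j+1).choose j : ℕ) : ℚ) := by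
      norm_num [show m+1+j = m+j+1 by ring]
    have q7 : (((m+j+2).choose (j+1) : ℕ) : ℚ)
        = (((m+j+1).choose j : ℕ) : ℚ) + (((m+j+1).choose (j+1) : ℕ) : ℚ) := by
      rw [show m+j+2 = (m+j+1)+1 by ring, h2]; push_cast; ring
    rw [q1, q2, q3, q4, q5, q6, q7]; ring

lemma cc_eq (m j : ℕ) (h : j < m) :
    cc m j = (((m+j).choose j : ℕ) : ℚ) * (((m - j : ℕ) : ℚ) / ((m + j : ℕ) : ℚ)) := by
  match j with
  | 0 =>
    have hm : ((m:ℕ):ℚ) ≠ 0 := Nat.cast_ne_zero.mpr h.ne'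
    simp [cc, div_self hm]
  | j+1 =>
    have key : ((m+j+1 : ℕ):ℚ) * (((m+j).choose j : ℕ):ℚ)
        = (((m+j+1).choose (j+1) : ℕ) : ℚ) * ((j+1 : ℕ):ℚ) := by
      exact_mod_cast Nat.add_one_mul_choose_eq (m+j) j
    have hne : ((m+(j+1) : ℕ):ℚ) ≠ 0 := by positivity
    have hsub : ((m - (j+1) : ℕ) : ℚ) = (m:ℚ) - ((j:ℚ)+1) := by
      rw [Nat.cast_sub h.le]; push_cast; ring
    have hch : (((m+(j+1)).choose (j+1) : ℕ) : ℚ) = (((m+j+1).choose (j+1) : ℕ) : ℚ) := by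
      norm_num [show m+(j+1) = m+j+1 by ring]
    simp only [cc, hsub, hch]
    rw [← mul_div_assoc, eq_div_iff hne]
    push_cast at key ⊢
    linear_combination (-2 : ℚ) * key

lemma cc_diag (j : ℕ) : cc (j+1) (j+1) = 0 := by
  have h1 : (j+1+j+1).choose (j+1) = (2*j+1).choose j + (2*j+1).choose (j+1) := by
    rw [show j+1+j+1 = (2*j+1)+1 by ring, Nat.choose_succ_succ']
  have h2 : (2*j+1).choose (j+1) = (2*j+1).choose j := Nat.choose_symm_half j
  have h3 : (j+1+j).choose j = (2*j+1).choose j := by rw [show j+1+j = 2*j+1 by ring]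
  simp only [cc, h1, h2, h3]
  push_cast; ring

lemma peel (b : ℚ) (f : ℕ → ℚ) (d : ℕ) :
    ∑ j ∈ range (d+1), f j * b^(d-j) = b * ∑ j ∈ range d, f j * b^(d-1-j) + f d := by
  rw [Finset.sum_range_succ, Finset.mul_sum, Nat.sub_self, pow_zero, mul_one]
  congr 1
  apply Finset.sum_congr rfl
  intro j hj
  have hj' : j < d := Finset.mem_range.mp hj
  rw [show d - j = (d-1-j)+1 by omega, pow_succ]
  ring

lemma Bl (b : ℚ) (m d : ℕ) :
    ∑ j ∈ range (d+1), cc (m+1) j * b^(d-j)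
      = ∑ j ∈ range (d+1), cc m j * b^(d-j) + ∑ j ∈ range d, cc (m+1) j * b^(d-1-j) := by
  induction d with
  | zero => simp [cc]
  | succ d ih =>
    have e1 := peel b (cc (m+1)) (d+1)
    have e2 := peel b (cc m) (d+1)
    have e3 := peel b (cc (m+1)) d
    have e4 := cc_pascal m d
    simp only [Nat.add_sub_cancel] at e1 e2 ⊢
    linear_combination e1 - e2 - e3 + b*ih + e4

lemma SUM (b : ℚ) (m d : ℕ) :
    ∑ j ∈ range (d+1+1), cc (m+1+1) j * b^(d+1-j) =
      ∑ j ∈ range (d+1+1), cc m j * b^(d+1-j)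
        + 2 * ∑ j ∈ range (d+1), cc (m+1) j * b^(d-j)
        + ∑ j ∈ range d, cc (m+1+1) j * b^(d-1-j) := by
  have h1 := Bl b (m+1) (d+1)
  have h2 := Bl b m (d+1)
  have h3 := Bl b (m+1) d
  simp only [Nat.add_sub_cancel] at h1 h2 h3
  rw [h1, h2, h3]; ring

lemma SUM0 (b : ℚ) (n : ℕ) :
    ∑ j ∈ range (n+1+1), cc (n+1+1) j * b^(n+1-j) =
      (b+1) * ∑ j ∈ range (n+1), cc (n+1) j * b^(n-j)
        + ∑ j ∈ range n, cc (n+1+1) j * b^(n-1-j) := by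
  have h1 := Bl b (n+1) (n+1)
  have h2 := Bl b (n+1) n
  have h3 := peel b (cc (n+1)) (n+1)
  simp only [Nat.add_sub_cancel] at h1 h2 h3
  rw [h1, h3, h2, cc_diag]
  ring

def FF (b : ℚ) (n k : ℕ) : ℚ := ∑ j ∈ Finset.range (n-k+1), cc (n+k+1) j * b^(n-k-j)

lemma FF_conv (b : ℚ) (n k p a x : ℕ) (hp : n+k+1 = p) (ha : n-k+1 = a) (hx : n-k = x) :
    FF b n k = ∑ j ∈ range a, cc p j * b^(x-j) := by subst hp; subst ha; subst hx; rfl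

lemma key (b : ℚ) (r : ℕ → ℤ → ℚ)
    (h0 : ∀ k : ℤ, r 0 k = if k = 0 then 1 else 0)
    (hneg : ∀ (n : ℕ) (k : ℤ), k < 0 → r n k = 0)
    (hrec : ∀ (n : ℕ) (k : ℤ), 0 ≤ k →
      r (n + 1) k = r n (k - 1) + (if k = 0 then b + 1 else 2) * r n k + r n (k + 1)) :
    ∀ (n : ℕ) (k : ℤ), r n k = if 0 ≤ k ∧ k ≤ (n:ℤ) then FF b n k.toNat else 0 := by
  intro n
  induction n with
  | zero =>
    intro k
    rw [h0]
    by_cases hk : k = 0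
    · subst hk
      rw [if_pos rfl, if_pos ⟨le_refl 0, by omega⟩]
      simp [FF, cc]
    · rw [if_neg hk, if_neg (by omega)]
  | succ n ih =>
    intro k
    rcases lt_or_ge k 0 with hk | hk
    · rw [hneg _ _ hk, if_neg (by omega)]
    · obtain ⟨k', rfl⟩ : ∃ k' : ℕ, k = (k' : ℤ) := ⟨k.toNat, (Int.toNat_of_nonneg hk).symm⟩
      rw [hrec n k' hk]
      match k' with
      | 0 =>
        have A : r n (((0:ℕ):ℤ) - 1) = 0 := hneg _ _ (by omega)
        have B : r n ((0:ℕ):ℤ) = FF b n 0 := by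
          rw [ih, if_pos ⟨by omega, by omega⟩]; norm_num
        have C : r n (((0:ℕ):ℤ) + 1) = if 1 ≤ n then FF b n 1 else 0 := by
          rw [ih]
          by_cases h1 : 1 ≤ n
          · rw [if_pos ⟨by omega, by omega⟩, if_pos h1]; norm_num
          · rw [if_neg (by omega), if_neg h1]
        rw [A, B, C, if_pos (show ((0:ℕ):ℤ) = 0 by norm_num),
          if_pos (show (0:ℤ) ≤ ((0:ℕ):ℤ) ∧ ((0:ℕ):ℤ) ≤ ((n+1 : ℕ):ℤ) by constructor <;> omega)]
        have ht : (((0:ℕ):ℤ)).toNat = 0 := by norm_num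
        rw [ht]
        match n with
        | 0 =>
          rw [if_neg (by omega)]
          simp [FF, cc, Finset.sum_range_succ]
          ring
        | (n'+1) =>
          rw [if_pos (by omega)]
          have hs := SUM0 b (n'+1)
          simp only [Nat.add_sub_cancel] at hs
          rw [FF_conv b (n'+1+1) 0 (n'+1+1+1) (n'+1+1+1) (n'+1+1) (by omega) (by omega) (by omega),
            FF_conv b (n'+1) 0 (n'+1+1) (n'+1+1) (n'+1) (by omega) (by omega) (by omega),
            FF_conv b (n'+1) 1 (n'+1+1+1) (n'+1) n' (by omega) (by omega) (by omega),
            hs]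
          ring
      | (e+1) =>
        have A : r n (((e+1:ℕ):ℤ) - 1) = if e ≤ n then FF b n e else 0 := by
          rw [show ((e+1:ℕ):ℤ) - 1 = ((e:ℕ):ℤ) by push_cast; ring, ih]
          by_cases h : e ≤ n
          · rw [if_pos ⟨by omega, by omega⟩, if_pos h, Int.toNat_natCast]
          · rw [if_neg (by omega), if_neg h]
        have B : r n ((e+1:ℕ):ℤ) = if e+1 ≤ n then FF b n (e+1) else 0 := by
          rw [ih]
          by_cases h : e+1 ≤ n
          · rw [if_pos ⟨by omega, by omega⟩, if_pos h, Int.toNat_natCast]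
          · rw [if_neg (by omega), if_neg h]
        have C : r n (((e+1:ℕ):ℤ) + 1) = if e+2 ≤ n then FF b n (e+2) else 0 := by
          rw [show ((e+1:ℕ):ℤ) + 1 = ((e+2:ℕ):ℤ) by push_cast; ring, ih]
          by_cases h : e+2 ≤ n
          · rw [if_pos ⟨by omega, by omega⟩, if_pos h, Int.toNat_natCast]
          · rw [if_neg (by omega), if_neg h]
        rw [A, B, C, if_neg (show ¬((e+1:ℕ):ℤ) = 0 by omega)]
        by_cases hbig : n + 1 < e + 1
        · rw [if_neg (by omega), if_neg (by omega), if_neg (by omega), if_neg (by omega)]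
          ring
        · by_cases heq : e + 1 = n + 1
          · obtain rfl : e = n := by omega
            rw [if_pos (by omega), if_neg (by omega), if_neg (by omega),
              if_pos (show (0:ℤ) ≤ ((e+1:ℕ):ℤ) ∧ ((e+1:ℕ):ℤ) ≤ ((e+1:ℕ):ℤ) by constructor <;> omega),
              Int.toNat_natCast]
            simp [FF, Nat.sub_self, cc]
          · obtain ⟨d, rfl⟩ : ∃ d, n = e+1+d := ⟨n-(e+1), by omega⟩
            rw [if_pos (show e ≤ e+1+d by omega), if_pos (show e+1 ≤ e+1+d by omega),
              if_pos (show (0:ℤ) ≤ ((e+1:ℕ):ℤ) ∧ ((e+1:ℕ):ℤ) ≤ ((e+1+d+1:ℕ):ℤ) by constructor <;> omega),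
              Int.toNat_natCast]
            have hC2 : (if e+2 ≤ e+1+d then FF b (e+1+d) (e+2) else 0)
                = ∑ j ∈ range d, cc (2*e+d+2+1+1) j * b^(d-1-j) := by
              by_cases hd : 1 ≤ d
              · rw [if_pos (by omega),
                  FF_conv b (e+1+d) (e+2) (2*e+d+2+1+1) d (d-1) (by omega) (by omega) (by omega)]
              · rw [if_neg (by omega), show d = 0 by omega, Finset.range_zero,
                  Finset.sum_empty]
            rw [hC2,
              FF_conv b (e+1+d+1) (e+1) (2*e+d+2+1+1) (d+1+1) (d+1) (by omega) (by omega) (by omega),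
              FF_conv b (e+1+d) e (2*e+d+2) (d+1+1) (d+1) (by omega) (by omega) (by omega),
              FF_conv b (e+1+d) (e+1) (2*e+d+2+1) (d+1) d (by omega) (by omega) (by omega),
              SUM b (2*e+d+2) d]

theorem stmt_13 (b : ℚ) (r : ℕ → ℤ → ℚ)
    (h0 : ∀ k : ℤ, r 0 k = if k = 0 then 1 else 0)
    (hneg : ∀ (n : ℕ) (k : ℤ), k < 0 → r n k = 0)
    (hrec : ∀ (n : ℕ) (k : ℤ), 0 ≤ k →
      r (n + 1) k = r n (k - 1) + (if k = 0 then b + 1 else 2) * r n k + r n (k + 1)) :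
    ∀ n k : ℕ, k ≤ n →
      r n (k : ℤ) = ∑ j ∈ Finset.range (n - k + 1),
        ((n + k + 1 + j).choose j : ℚ) * (((n + k + 1 - j : ℕ) : ℚ) / ((n + k + 1 + j : ℕ) : ℚ)) *
          b ^ (n - k - j) := by
  intro n k hkn
  rw [key b r h0 hneg hrec n k, if_pos ⟨Int.natCast_nonneg k, by exact_mod_cast hkn⟩,
    Int.toNat_natCast]
  show (∑ j ∈ Finset.range (n-k+1), cc (n+k+1) j * b^(n-k-j)) = _
  apply Finset.sum_congr rfl
  intro j hj
  have hlt : j < n+k+1 := by have := Finset.mem_range.mp hj; omega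
  rw [cc_eq (n+k+1) j hlt]
end

section
/- For all n ≥ 0, the moments M_b(n) = Σ_{j=0}^n (C(n+j,j) - C(n+j,j-1))·b^{n-j} satisfy M_0(n) = C_n (the n-th Catalan number) and M_1(n) = C_{n+1}. -/
open Finset

/-- M_b(n) = Σ_{j=0}^n (C(n+j,j) - C(n+j,j-1))·b^{n-j}, with C(m,-1) = 0. -/
def Mb (b : ℚ) (n : ℕ) : ℚ :=
  ∑ j ∈ Finset.range (n + 1),
    (((n + j).choose j : ℚ) - if j = 0 then 0 else ((n + j).choose (j - 1) : ℚ)) * b ^ (n - j)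

lemma cat_eq (m : ℕ) : (catalan m : ℚ) = ((2*m).choose m : ℚ) - ((2*m).choose (m+1) : ℚ) := by
  have h1 : ((m:ℚ)+1) * (catalan m : ℚ) = ((2*m).choose m : ℚ) := by
    exact_mod_cast congrArg (Nat.cast (R := ℚ))
      (succ_mul_catalan_eq_centralBinom m)
  have h2 : ((2*m).choose (m+1) : ℚ) * ((m:ℚ)+1) = ((2*m).choose m : ℚ) * m := by
    have := Nat.choose_succ_right_eq (2*m) m
    have h : 2*m - m = m := by omega
    rw [h] at this
    exact_mod_cast this
  nlinarith [h1, h2]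

lemma pascal (a b : ℕ) : ((a+1).choose (b+1) : ℚ) = (a.choose b : ℚ) + (a.choose (b+1) : ℚ) := by
  exact_mod_cast Nat.choose_succ_succ' a b

lemma csymm {m a b : ℕ} (h : a + b = m) : m.choose a = m.choose b := by
  have hb : b ≤ m := by omega
  have := Nat.choose_symm hb
  rw [show m - b = a by omega] at this
  exact this

lemma sum_ballot (n k : ℕ) :
    ∑ j ∈ Finset.range (k+1),
      (((n + j).choose j : ℚ) - if j = 0 then 0 else ((n + j).choose (j - 1) : ℚ))
    = ((n+k+1).choose k : ℚ) - if k = 0 then 0 else ((n+k+1).choose (k-1) : ℚ) := by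
  induction k with
  | zero => simp
  | succ k ih =>
    rw [Finset.sum_range_succ, ih]
    cases k with
    | zero =>
      simp only [if_pos rfl, if_neg (Nat.succ_ne_zero 0)]
      have e1 : n+(0+1)+1 = (n+1)+1 := by ring
      have e2 : n+(0+1) = n+1 := by ring
      have e3 : n+0+1 = n+1 := by ring
      rw [e1, e2, e3, pascal n 0]
      simp [Nat.choose_one_right]
      ring
    | succ k =>
      simp only [if_neg (Nat.succ_ne_zero _), Nat.succ_sub_one]
      have e1 : n+(k+1)+1 = (n+k+1)+1 := by ring
      have e2 : n+(k+1+1)+1 = ((n+k+1)+1)+1 := by ring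
      have e3 : n+(k+1+1) = (n+k+1)+1 := by ring
      rw [e1, e2, e3, pascal ((n+k+1)+1) k, pascal ((n+k+1)+1) (k+1), pascal (n+k+1) k]
      ring

theorem stmt_14 (n : ℕ) : Mb 0 n = catalan n ∧ Mb 1 n = catalan (n + 1) := by
  constructor
  · -- b = 0
    have hz : Mb 0 n = ((n + n).choose n : ℚ) -
        if n = 0 then 0 else ((n + n).choose (n - 1) : ℚ) := by
      unfold Mb
      rw [Finset.sum_eq_single_of_mem n (Finset.self_mem_range_succ n)]
      · simp
      · intro j hj hjn
        have : n - j ≠ 0 := by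
          simp only [Finset.mem_range] at hj; omega
        simp [zero_pow this]
    rw [hz, cat_eq n]
    rcases Nat.eq_zero_or_pos n with h | h
    · subst h; simp
    · rw [if_neg (by omega), show n + n = 2*n from by ring]
      congr 2
      exact csymm (by omega)
  · -- b = 1
    have ho : Mb 1 n = ((n+n+1).choose n : ℚ) -
        if n = 0 then 0 else ((n+n+1).choose (n-1) : ℚ) := by
      unfold Mb
      simp only [one_pow, mul_one]
      exact sum_ballot n n
    rw [ho, cat_eq (n+1)]
    have e : 2*(n+1) = (n+n+1)+1 := by ring
    rw [e, pascal (n+n+1) n, pascal (n+n+1) (n+1)]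
    have s1 : (n+n+1).choose (n+1) = (n+n+1).choose n := by
      exact csymm (by omega)
    rcases Nat.eq_zero_or_pos n with h | h
    · subst h; norm_num
    · have s2 : (n+n+1).choose (n+2) = (n+n+1).choose (n-1) := by
        exact csymm (by omega)
      rw [if_neg (by omega), s1, s2]
      ring
end

section
/- For all n ≥ 0, Σ_{j=0}^n (C(n+j,j) - C(n+j,j-1))·2^{n-j} = C(2n+1, n). -/
open Finset

lemma aux_15 (n m : ℕ) :
    (∑ j ∈ Finset.range (m + 1),
        (((n + j).choose j : ℤ) - if j = 0 then 0 else ((n + j).choose (j - 1) : ℤ)) *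
          2 ^ (m - j)) =
      ((n + m + 1).choose m : ℤ) := by
  induction m with
  | zero => simp
  | succ m ih =>
    rw [Finset.sum_range_succ]
    have h1 : (∑ j ∈ Finset.range (m + 1),
        (((n + j).choose j : ℤ) - if j = 0 then 0 else ((n + j).choose (j - 1) : ℤ)) *
          2 ^ (m + 1 - j)) = 2 * ((n + m + 1).choose m : ℤ) := by
      rw [← ih, Finset.mul_sum]
      apply Finset.sum_congr rfl
      intro j hj
      have : j ≤ m := Nat.lt_succ_iff.mp (Finset.mem_range.mp hj)
      have h2 : m + 1 - j = (m - j) + 1 := by omega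
      rw [h2, pow_succ]
      ring
    rw [h1]
    have h3 : (n + m + 1 + 1).choose (m + 1)
        = (n + m + 1).choose m + (n + m + 1).choose (m + 1) :=
      Nat.choose_succ_succ' (n + m + 1) m
    simp only [if_neg (Nat.succ_ne_zero m), Nat.succ_sub_one]
    have h4 : n + (m + 1) = n + m + 1 := by omega
    rw [h4, h3]
    simp only [Nat.add_sub_cancel, Nat.sub_self, pow_zero]
    push_cast
    ring

theorem stmt_15 (n : ℕ) :
    (∑ j ∈ Finset.range (n + 1),
        (((n + j).choose j : ℤ) - if j = 0 then 0 else ((n + j).choose (j - 1) : ℤ)) *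
          2 ^ (n - j)) =
      ((2 * n + 1).choose n : ℤ) := by
  have h : 2 * n + 1 = n + n + 1 := by ring
  rw [h, ← aux_15 n n]
end

section
/- Define s(n,k) by s(0,k) = [k=0], s(n,0) = (b+2)·s(n-1,0) + (2-b)·s(n-1,1), and s(n,k) = s(n-1,k-1) + 2·s(n-1,k) + s(n-1,k+1) for k ≥ 1 (with s(n,k)=0 for k<0). Then s(n,k) = Σ_{j=0}^{n-k} C(n+k+j, j)·b^{n-k-j} for 0 ≤ k ≤ n, and in particular the moments M(b,n) = s(n,0) = Σ_{j=0}^n C(n+j,j)·b^{n-j}. -/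
open Finset

lemma shift1 (m : ℕ) (F : ℕ → ℚ) (h : F 0 = 0) :
    ∑ i ∈ range (m+1), F i = ∑ j ∈ range m, F (j+1) := by
  rw [Finset.sum_range_succ']; simp [h]

lemma pascal2_s19 (N j : ℕ) : (N+2).choose (j+2) = N.choose (j+2) + 2*N.choose (j+1) + N.choose j := by
  simp [Nat.choose_succ_succ]; ring

lemma key1 (b : ℚ) (a m : ℕ) :
    ∑ j ∈ range (m+1), ((a+2+j).choose j : ℚ) * b^(m-j)
      = (∑ j ∈ range (m+1), ((a+j).choose j : ℚ) * b^(m-j))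
      + 2 * (∑ j ∈ range m, ((a+1+j).choose j : ℚ) * b^(m-1-j))
      + ∑ j ∈ range (m-1), ((a+2+j).choose j : ℚ) * b^(m-2-j) := by
  have h2 : ∑ j ∈ range m, ((a+1+j).choose j : ℚ) * b^(m-1-j)
      = ∑ i ∈ range (m+1), (if i = 0 then 0 else ((a+i).choose (i-1) : ℚ) * b^(m-i)) := by
    rw [shift1 m _ (by simp)]
    apply Finset.sum_congr rfl
    intro j hj
    have e1 : a + (j+1) = a + 1 + j := by omega
    have e2 : m - (j+1) = m - 1 - j := by omega
    simp [e1, e2]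
  have h3 : ∑ j ∈ range (m-1), ((a+2+j).choose j : ℚ) * b^(m-2-j)
      = ∑ i ∈ range (m+1), (if i ≤ 1 then 0 else ((a+i).choose (i-2) : ℚ) * b^(m-i)) := by
    rw [shift1 m _ (by simp)]
    rcases m with _ | m
    · simp
    · rw [shift1 m (fun j => if j+1 ≤ 1 then 0 else ((a+(j+1)).choose (j+1-2) : ℚ) * b^(m+1-(j+1))) (by simp)]
      apply Finset.sum_congr
      · congr 1
      intro j hj
      have e1 : a + (j+1+1) = a + 2 + j := by omega
      have e2 : m + 1 - (j+1+1) = m + 1 - 2 - j := by omega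
      simp [e1, e2]
  rw [h2, h3, Finset.mul_sum, ← Finset.sum_add_distrib, ← Finset.sum_add_distrib]
  apply Finset.sum_congr rfl
  intro j hj
  rcases j with _ | _ | j
  · simp
  · have : a + 1 + 1 = a + 2 := by omega
    norm_num [this]
    ring
  · have hne : ¬ (j + 2 = 0) := by omega
    have hle : ¬ (j + 2 ≤ 1) := by omega
    rw [if_neg hne, if_neg hle]
    have e1 : a + 2 + (j + 2) = (a + (j+2)) + 2 := by omega
    have e2 : j + 2 - 1 = j + 1 := by omega
    have e3 : j + 2 - 2 = j := by omega
    rw [e1, e2, e3, pascal2_s19 (a + (j+2)) j]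
    push_cast
    ring

section
lemma shift1' (m : ℕ) (F : ℕ → ℚ) (h : F 0 = 0) :
    ∑ i ∈ range (m+1), F i = ∑ j ∈ range m, F (j+1) := by
  rw [Finset.sum_range_succ']; simp [h]

-- (★★): S1 + S2 - b*S2 = C(2M+3, M+2)
lemma starstar (b : ℚ) (M : ℕ) :
    (∑ j ∈ range (M+2), ((M+1+j).choose j : ℚ) * b^(M+1-j))
      + (∑ j ∈ range (M+1), ((M+2+j).choose j : ℚ) * b^(M-j))
      - b * (∑ j ∈ range (M+1), ((M+2+j).choose j : ℚ) * b^(M-j))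
    = ((2*M+3).choose (M+2) : ℚ) := by
  have hS2 : ∑ j ∈ range (M+1), ((M+2+j).choose j : ℚ) * b^(M-j)
      = ∑ i ∈ range (M+2), (if i = 0 then 0 else ((M+1+i).choose (i-1) : ℚ) * b^(M+1-i)) := by
    rw [shift1' (M+1) _ (by simp)]
    apply Finset.sum_congr rfl
    intro j hj
    have e1 : M + 1 + (j+1) = M + 2 + j := by omega
    have e2 : M + 1 - (j+1) = M - j := by omega
    simp [e1, e2]
  have hbS2 : (∑ j ∈ range (M+2), (if j = M+1 then 0 else ((M+2+j).choose j : ℚ) * b^(M+1-j)))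
      = b * (∑ j ∈ range (M+1), ((M+2+j).choose j : ℚ) * b^(M-j)) := by
    rw [Finset.sum_range_succ, if_pos rfl, add_zero, Finset.mul_sum]
    apply Finset.sum_congr rfl
    intro j hj
    simp only [mem_range] at hj
    rw [if_neg (by omega)]
    have e2 : M + 1 - j = (M - j) + 1 := by omega
    rw [e2, pow_succ]
    ring
  rw [← hbS2, hS2, ← Finset.sum_add_distrib, ← Finset.sum_sub_distrib]
  have : ∀ j ∈ range (M+2),
      (((M+1+j).choose j : ℚ) * b^(M+1-j)
        + (if j = 0 then 0 else ((M+1+j).choose (j-1) : ℚ) * b^(M+1-j))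
        - (if j = M+1 then 0 else ((M+2+j).choose j : ℚ) * b^(M+1-j)))
      = (if j = M+1 then ((2*M+3).choose (M+2) : ℚ) else 0) := by
    intro j hj
    simp only [mem_range] at hj
    by_cases hjm : j = M+1
    · subst hjm
      rw [if_pos rfl, if_pos rfl, if_neg (by omega)]
      have e1 : M + 1 + (M + 1) = 2*M+2 := by omega
      have e2 : M + 1 - (M+1) = 0 := by omega
      have e3 : M + 1 - 1 = M := by omega
      rw [e1, e2, e3]
      have hnat : (2*M+2).choose (M+1) + (2*M+2).choose M = (2*M+3).choose (M+2) := by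
        have h1 : (2*M+3).choose (M+2) = (2*M+2).choose (M+1) + (2*M+2).choose (M+2) := by
          have := Nat.choose_succ_succ (2*M+2) (M+1)
          simpa using this
        have h2 : (2*M+2).choose (M+2) = (2*M+2).choose M := by
          rw [← Nat.choose_symm (by omega : M + 2 ≤ 2*M+2)]
          congr 1; omega
        omega
      rw [← hnat]
      push_cast
      ring
    · rw [if_neg hjm]
      rcases j with _ | j
      · simp
      · rw [if_neg (by omega : ¬ (j+1 = 0))]
        rw [if_neg (by omega : ¬ (j+1 = M+1))]
        have e1 : M + 2 + (j+1) = (M + 1 + (j+1)) + 1 := by omega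
        have e2 : (M + 1 + (j+1)) + 1 = (M+1+j) + 1 + 1 := by omega
        rw [e1, Nat.choose_succ_succ]
        have e3 : M + 1 + (j + 1) = M + 1 + j + 1 := by omega
        have e4 : j + 1 - 1 = j := by omega
        rw [e3, e4]
        push_cast
        ring
  rw [Finset.sum_congr rfl this, Finset.sum_ite_eq' (range (M+2)) (M+1)]
  simp
end

lemma star (b : ℚ) (M : ℕ) :
    ∑ j ∈ range (M+3), ((M+j).choose j : ℚ) * b^(M+2-j)
      = b * (∑ j ∈ range (M+2), ((M+1+j).choose j : ℚ) * b^(M+1-j))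
      + (1-b) * (∑ j ∈ range (M+1), ((M+2+j).choose j : ℚ) * b^(M-j)) := by
  have split : ∀ j ∈ range (M+3), ((M+j).choose j : ℚ) * b^(M+2-j)
      = ((M+1+j).choose j : ℚ) * b^(M+2-j)
        - (if j = 0 then 0 else ((M+j).choose (j-1) : ℚ) * b^(M+2-j)) := by
    intro j _
    rcases j with _ | j
    · simp
    · rw [if_neg (by omega)]
      have e1 : M + 1 + (j+1) = (M + j + 1) + 1 := by omega
      have e2 : M + (j+1) = M + j + 1 := by omega
      have e3 : j + 1 - 1 = j := by omega
      rw [e1, Nat.choose_succ_succ, e2, e3]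
      push_cast
      ring
  rw [Finset.sum_congr rfl split, Finset.sum_sub_distrib]
  have hA : ∑ j ∈ range (M+3), ((M+1+j).choose j : ℚ) * b^(M+2-j)
      = b * (∑ j ∈ range (M+2), ((M+1+j).choose j : ℚ) * b^(M+1-j))
        + ((2*M+3).choose (M+2) : ℚ) := by
    rw [Finset.sum_range_succ]
    congr 1
    · rw [Finset.mul_sum]
      apply Finset.sum_congr rfl
      intro j hj
      simp only [mem_range] at hj
      have e2 : M + 2 - j = (M + 1 - j) + 1 := by omega
      rw [e2, pow_succ]
      ring
    · have e1 : M + 1 + (M+2) = 2*M+3 := by omega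
      have e2 : M + 2 - (M+2) = 0 := by omega
      rw [e1, e2]
      simp
  have hB : ∑ j ∈ range (M+3), (if j = 0 then 0 else ((M+j).choose (j-1) : ℚ) * b^(M+2-j))
      = ∑ j ∈ range (M+2), ((M+1+j).choose j : ℚ) * b^(M+1-j) := by
    rw [shift1' (M+2) _ (by simp)]
    apply Finset.sum_congr rfl
    intro j hj
    have e1 : M + (j+1) = M + 1 + j := by omega
    have e2 : M + 2 - (j+1) = M + 1 - j := by omega
    simp [e1, e2]
  rw [hA, hB]
  have hss := starstar b M
  linarith [hss]

lemma key2 (b : ℚ) (n : ℕ) :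
    ∑ j ∈ range (n+2), ((n+1+j).choose j : ℚ) * b^(n+1-j)
      = (b+2) * (∑ j ∈ range (n+1), ((n+j).choose j : ℚ) * b^(n-j))
      + (2-b) * (∑ j ∈ range n, ((n+1+j).choose j : ℚ) * b^(n-1-j)) := by
  rcases n with _ | M
  · simp [Finset.sum_range_succ]
  · have E1 : ∀ j : ℕ, M+1+1+j = M+2+j := fun j => by omega
    have E2 : ∀ j : ℕ, M+1+1-j = M+2-j := fun j => by omega
    have E3 : ∀ j : ℕ, M+1-1-j = M-j := fun j => by omega
    have E4 : M+1+2 = M+3 := by omega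
    simp only [E1, E2, E3, E4]
    have hk1 := key1 b M (M+2)
    have F1 : M+2+1 = M+3 := by omega
    have F2 : ∀ j : ℕ, M+2-1-j = M+1-j := fun j => by omega
    have F3 : M+2-1 = M+1 := by omega
    have F4 : ∀ j : ℕ, M+2-2-j = M-j := fun j => by omega
    simp only [F1, F2, F3, F4] at hk1
    rw [hk1, star b M]
    ring

def Dfun (b : ℚ) (n k : ℕ) : ℚ :=
  if k ≤ n then ∑ j ∈ Finset.range (n - k + 1), ((n + k + j).choose j : ℚ) * b ^ (n - k - j) else 0

lemma D0 (b : ℚ) (k : ℕ) : Dfun b 0 k = if k = 0 then 1 else 0 := by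
  rcases k with _ | k
  · simp [Dfun]
  · simp [Dfun]

lemma Drec (b : ℚ) (n k : ℕ) :
    Dfun b (n+1) (k+1) = Dfun b n k + 2 * Dfun b n (k+1) + Dfun b n (k+2) := by
  by_cases hk : k ≤ n
  · obtain ⟨m, rfl⟩ : ∃ m, n = k + m := ⟨n - k, by omega⟩
    have hD1 : Dfun b (k+m+1) (k+1) = ∑ j ∈ range (m+1), ((2*k+m+2+j).choose j : ℚ) * b^(m-j) := by
      simp only [Dfun, if_pos (show k+1 ≤ k+m+1 by omega)]
      have e : k+m+1-(k+1)+1 = m+1 := by omega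
      rw [e]
      apply Finset.sum_congr rfl
      intro j _
      have e1 : k+m+1+(k+1)+j = 2*k+m+2+j := by omega
      have e2 : k+m+1-(k+1)-j = m-j := by omega
      rw [e1, e2]
    have hD2 : Dfun b (k+m) k = ∑ j ∈ range (m+1), ((2*k+m+j).choose j : ℚ) * b^(m-j) := by
      simp only [Dfun, if_pos (show k ≤ k+m by omega)]
      have e : k+m-k+1 = m+1 := by omega
      rw [e]
      apply Finset.sum_congr rfl
      intro j _
      have e1 : k+m+k+j = 2*k+m+j := by omega
      have e2 : k+m-k-j = m-j := by omega
      rw [e1, e2]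
    have hD3 : Dfun b (k+m) (k+1) = ∑ j ∈ range m, ((2*k+m+1+j).choose j : ℚ) * b^(m-1-j) := by
      by_cases hm : 1 ≤ m
      · simp only [Dfun, if_pos (show k+1 ≤ k+m by omega)]
        have e : k+m-(k+1)+1 = m := by omega
        rw [e]
        apply Finset.sum_congr rfl
        intro j _
        have e1 : k+m+(k+1)+j = 2*k+m+1+j := by omega
        have e2 : k+m-(k+1)-j = m-1-j := by omega
        rw [e1, e2]
      · have hm0 : m = 0 := by omega
        subst hm0
        simp only [Dfun, if_neg (show ¬ k+1 ≤ k+0 by omega)]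
        simp
    have hD4 : Dfun b (k+m) (k+2) = ∑ j ∈ range (m-1), ((2*k+m+2+j).choose j : ℚ) * b^(m-2-j) := by
      by_cases hm : 2 ≤ m
      · simp only [Dfun, if_pos (show k+2 ≤ k+m by omega)]
        have e : k+m-(k+2)+1 = m-1 := by omega
        rw [e]
        apply Finset.sum_congr rfl
        intro j _
        have e1 : k+m+(k+2)+j = 2*k+m+2+j := by omega
        have e2 : k+m-(k+2)-j = m-2-j := by omega
        rw [e1, e2]
      · have e : m - 1 = 0 := by omega
        simp only [Dfun, if_neg (show ¬ k+2 ≤ k+m by omega), e]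
        simp
    rw [hD1, hD2, hD3, hD4]
    exact key1 b (2*k+m) m
  · simp only [Dfun, if_neg (show ¬ k+1 ≤ n+1 by omega), if_neg hk,
      if_neg (show ¬ k+1 ≤ n by omega), if_neg (show ¬ k+2 ≤ n by omega)]
    ring

lemma Drec0 (b : ℚ) (n : ℕ) :
    Dfun b (n+1) 0 = (b+2) * Dfun b n 0 + (2-b) * Dfun b n 1 := by
  have h1 : Dfun b (n+1) 0 = ∑ j ∈ range (n+2), ((n+1+j).choose j : ℚ) * b^(n+1-j) := by
    simp only [Dfun, if_pos (Nat.zero_le _)]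
    have e : n+1-0+1 = n+2 := by omega
    rw [e]
    apply Finset.sum_congr rfl
    intro j _
    have e1 : n+1+0+j = n+1+j := by omega
    have e2 : n+1-0-j = n+1-j := by omega
    rw [e1, e2]
  have h2 : Dfun b n 0 = ∑ j ∈ range (n+1), ((n+j).choose j : ℚ) * b^(n-j) := by
    simp only [Dfun, if_pos (Nat.zero_le _)]
    have e : n-0+1 = n+1 := by omega
    rw [e]
    apply Finset.sum_congr rfl
    intro j _
    have e1 : n+0+j = n+j := by omega
    have e2 : n-0-j = n-j := by omega
    rw [e1, e2]
  have h3 : Dfun b n 1 = ∑ j ∈ range n, ((n+1+j).choose j : ℚ) * b^(n-1-j) := by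
    by_cases hn : 1 ≤ n
    · simp only [Dfun, if_pos hn]
      have e : n-1+1 = n := by omega
      rw [e]
    · have e : n = 0 := by omega
      subst e
      simp [Dfun]
  rw [h1, h2, h3]
  exact key2 b n

theorem stmt_19 (b : ℚ) (s : ℕ → ℕ → ℚ)
    (h0 : ∀ k : ℕ, s 0 k = if k = 0 then 1 else 0)
    (hrec0 : ∀ n : ℕ, s (n + 1) 0 = (b + 2) * s n 0 + (2 - b) * s n 1)
    (hrec : ∀ n k : ℕ, s (n + 1) (k + 1) = s n k + 2 * s n (k + 1) + s n (k + 2)) :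
    ∀ n k : ℕ, k ≤ n →
      s n k = ∑ j ∈ Finset.range (n - k + 1), ((n + k + j).choose j : ℚ) * b ^ (n - k - j) := by
  have main : ∀ n k, s n k = Dfun b n k := by
    intro n
    induction n with
    | zero => intro k; rw [h0, D0]
    | succ n ih =>
      intro k
      rcases k with _ | k
      · rw [hrec0, Drec0, ih 0, ih 1]
      · rw [hrec, Drec, ih k, ih (k+1), ih (k+2)]
  intro n k hk
  rw [main n k]
  simp only [Dfun, if_pos hk]
end
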